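/- arXiv:2603.11615 — 9 statements merged into one kernel-verified Lean document; each statement's English description precedes it below -/
import Mathlib

section
/- Let p be a prime, let n ≥ 0, and let f ∈ ℤ_p[[t₀,t₁,…,t_n]] be a nonzero formal power series such that the specialization f(t₀,0,…,0) ∈ ℤ_p[[t₀]] is nonzero and μ(f(t₀,0,…,0)) = μ(f). Then there exist a non-negative integer λ, a unit u of ℤ_p[[t₀,…,t_n]], and elements a₀,…,a_{λ−1} of the ideal (p,t₁,…,t_n) of ℤ_p[[t₁,…,t_n]] such that p^{−μ(f)}·f = u·(t₀^λ + Σ_{i=0}^{λ−1} aᵢ·t₀^i). -/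
/-- The `μ`-invariant of a (nonzero) element `f` of a ring: the largest `m`
such that `p ^ m` divides `f`. -/

noncomputable def mu {R : Type*} [CommRing R] (p : ℕ) (f : R) : ℕ :=
  sSup {m : ℕ | (p : R) ^ m ∣ f}




lemma mem_span_X_of_constantCoeff_eq_zero {n : ℕ} {K : Type*} [CommRing K]
    {z : MvPowerSeries (Fin n) K} (hz : MvPowerSeries.constantCoeff z = 0) :
    z ∈ Ideal.span (Set.range (MvPowerSeries.X : Fin n → MvPowerSeries (Fin n) K)) := by
  classical
  set h : Fin n → MvPowerSeries (Fin n) K := fun i d =>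
    if (∀ j < i, d j = 0) then z (d + Finsupp.single i 1) else 0 with hh
  have key : z = ∑ i : Fin n, MvPowerSeries.X i * h i := by
    ext d
    rw [map_sum]
    by_cases hd : d = 0
    · subst hd
      simp only [MvPowerSeries.coeff_zero_X_mul, Finset.sum_const_zero]
      simpa [MvPowerSeries.coeff_zero_eq_constantCoeff] using hz
    · have hsupp : d.support.Nonempty := Finsupp.support_nonempty_iff.mpr hd
      set i₀ := d.support.min' hsupp with hi₀
      have hterm : ∀ i : Fin n, (MvPowerSeries.coeff d) (MvPowerSeries.X i * h i)
          = if (Finsupp.single i 1 ≤ d ∧ ∀ j < i, d j = 0) then z d else 0 := by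
        intro i
        rw [MvPowerSeries.X_def, MvPowerSeries.coeff_monomial_mul]
        by_cases hle : Finsupp.single i 1 ≤ d
        · rw [if_pos hle]
          have hco : (MvPowerSeries.coeff (d - Finsupp.single i 1)) (h i) =
              if (∀ j < i, ((d - Finsupp.single i 1 : Fin n →₀ ℕ)) j = 0) then
                z ((d - Finsupp.single i 1) + Finsupp.single i 1) else 0 := rfl
          rw [hco]
          have hcancel : (d - Finsupp.single i 1) + Finsupp.single i 1 = d :=
            tsub_add_cancel_of_le hle
          have hcoord : ∀ j, j < i → (((d - Finsupp.single i 1 : Fin n →₀ ℕ)) j = 0 ↔ d j = 0) := by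
            intro j hj
            rw [Finsupp.tsub_apply, Finsupp.single_apply, if_neg (fun e => absurd e.symm (ne_of_lt hj)), Nat.sub_zero]
          rw [hcancel]
          by_cases hall : ∀ j < i, d j = 0
          · rw [if_pos (fun j hj => (hcoord j hj).mpr (hall j hj)), if_pos ⟨hle, hall⟩, one_mul]
          · rw [if_neg (fun H => hall (fun j hj => (hcoord j hj).mp (H j hj))),
              if_neg (fun H => hall H.2), mul_zero]
        · rw [if_neg hle, if_neg (fun H => hle H.1)]
      have hcond : ∀ i : Fin n, (Finsupp.single i 1 ≤ d ∧ ∀ j < i, d j = 0) ↔ i = i₀ := by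
        intro i
        constructor
        · rintro ⟨hle, hall⟩
          have hi : i ∈ d.support := by
            rw [Finsupp.mem_support_iff]
            have h1 : 1 ≤ d i := Finsupp.single_le_iff.mp hle
            omega
          have h1 : i₀ ≤ i := d.support.min'_le i hi
          rcases lt_or_eq_of_le h1 with h2 | h2
          · exact absurd (hall i₀ h2) (Finsupp.mem_support_iff.mp (d.support.min'_mem hsupp))
          · exact h2.symm
        · rintro rfl
          refine ⟨Finsupp.single_le_iff.mpr ?_, fun j hj => ?_⟩
          · have h1 : d i₀ ≠ 0 := Finsupp.mem_support_iff.mp (d.support.min'_mem hsupp)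
            omega
          · by_contra hne
            exact absurd (d.support.min'_le j (Finsupp.mem_support_iff.mpr hne)) (not_le.mpr hj)
      calc (MvPowerSeries.coeff d) z
          = ∑ i : Fin n, if i = i₀ then z d else 0 := by
            rw [Finset.sum_ite_eq' Finset.univ i₀ (fun _ => z d), if_pos (Finset.mem_univ _)]
            rfl
        _ = ∑ i : Fin n, (MvPowerSeries.coeff d) (MvPowerSeries.X i * h i) := by
            refine Finset.sum_congr rfl (fun i _ => ?_)
            rw [hterm i]
            simp only [hcond i]
  rw [key]
  exact Ideal.sum_mem _ (fun i _ => Ideal.mul_mem_right _ _ (Ideal.subset_span ⟨i, rfl⟩))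


section
variable {p : ℕ} [Fact p.Prime] {n : ℕ}

local notation "R" => MvPowerSeries (Fin n) ℤ_[p]

noncomputable def Igen (p n : ℕ) [Fact p.Prime] : Ideal (MvPowerSeries (Fin n) ℤ_[p]) :=
  Ideal.span (insert ((p : MvPowerSeries (Fin n) ℤ_[p]))
    (Set.range (MvPowerSeries.X : Fin n → MvPowerSeries (Fin n) ℤ_[p])))


lemma mem_Igen_iff {r : R} :
    r ∈ Igen p n ↔ (p : ℤ_[p]) ∣ MvPowerSeries.constantCoeff r := by
  constructor
  · intro hr
    have hle : Igen p n ≤ Ideal.comap (MvPowerSeries.constantCoeff)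
        (Ideal.span {(p : ℤ_[p])}) := by
      rw [Igen, Ideal.span_le]
      rintro x (rfl | ⟨i, rfl⟩)
      · refine Ideal.mem_comap.mpr ?_
        rw [map_natCast]
        exact Ideal.subset_span rfl
      · refine Ideal.mem_comap.mpr ?_
        rw [MvPowerSeries.constantCoeff_X]
        exact Ideal.zero_mem _
    have := hle hr
    rwa [Ideal.mem_comap, Ideal.mem_span_singleton] at this
  · rintro ⟨s, hs⟩
    have h1 : r = MvPowerSeries.C (MvPowerSeries.constantCoeff r)
        + (r - MvPowerSeries.C (MvPowerSeries.constantCoeff r)) := by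
      ring
    rw [h1]
    refine Ideal.add_mem _ ?_ ?_
    · rw [hs, map_mul, map_natCast]
      exact Ideal.mul_mem_right _ _ (Ideal.subset_span (Set.mem_insert _ _))
    · refine Ideal.span_mono (Set.subset_insert _ _) ?_
      refine mem_span_X_of_constantCoeff_eq_zero ?_
      simp

/-- weight (total degree) of an exponent -/
def wt {n : ℕ} (d : Fin n →₀ ℕ) : ℕ := ∑ j, d j

lemma wt_add {n : ℕ} (d e : Fin n →₀ ℕ) : wt (d + e) = wt d + wt e := by
  simp [wt, Finset.sum_add_distrib]

/-- the coefficientwise divisibility predicate -/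
def Pred (p : ℕ) [Fact p.Prime] {n : ℕ} (k : ℕ) (x : MvPowerSeries (Fin n) ℤ_[p]) : Prop :=
  ∀ d : Fin n →₀ ℕ, (p : ℤ_[p]) ^ (k - wt d) ∣ MvPowerSeries.coeff d x

lemma Pred.mono {k l : ℕ} (h : l ≤ k) {x : R} (hx : Pred p k x) : Pred p l x := by
  intro d
  exact dvd_trans (pow_dvd_pow _ (by omega)) (hx d)

lemma Pred.add {k : ℕ} {x y : R} (hx : Pred p k x) (hy : Pred p k y) : Pred p k (x + y) := by
  intro d
  rw [map_add]
  exact dvd_add (hx d) (hy d)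

lemma Pred.zero {k : ℕ} : Pred p k (0 : R) := by
  intro d; simp

lemma Pred.mul_left {k : ℕ} {x : R} (hx : Pred p k x) (r : R) : Pred p k (r * x) := by
  intro d
  classical
  rw [MvPowerSeries.coeff_mul]
  refine Finset.dvd_sum ?_
  rintro ⟨d1, d2⟩ hmem
  rw [Finset.HasAntidiagonal.mem_antidiagonal] at hmem
  have h2 : wt d2 ≤ wt d := by
    rw [← hmem, wt_add]; exact Nat.le_add_left _ _
  exact Dvd.dvd.mul_left (dvd_trans (pow_dvd_pow _ (Nat.sub_le_sub_left h2 k)) (hx d2)) _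

/-- `Pred` as an ideal -/
noncomputable def PredIdeal (p : ℕ) [Fact p.Prime] (n k : ℕ) : Ideal (MvPowerSeries (Fin n) ℤ_[p]) where
  carrier := {x | Pred p k x}
  add_mem' hx hy := hx.add hy
  zero_mem' := Pred.zero
  smul_mem' r x hx := by simpa [smul_eq_mul] using hx.mul_left r

lemma pred_p_mul {k : ℕ} {x : R} (hx : Pred p k x) : Pred p (k + 1) ((p : R) * x) := by
  intro d
  have : MvPowerSeries.coeff d ((p : R) * x) = (p:ℤ_[p]) * MvPowerSeries.coeff d x := by
    have hp : (p : R) = MvPowerSeries.C (p : ℤ_[p]) := by simp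
    rw [hp, MvPowerSeries.coeff_C_mul]
  rw [this]
  have h1 : k + 1 - wt d ≤ (k - wt d) + 1 := by omega
  exact dvd_trans (pow_dvd_pow _ h1) (by rw [pow_succ, mul_comm]; exact mul_dvd_mul_left _ (hx d))

lemma pred_X_mul {k : ℕ} {x : R} (hx : Pred p k x) (i : Fin n) :
    Pred p (k + 1) (MvPowerSeries.X i * x) := by
  intro d
  classical
  rw [MvPowerSeries.X_def, MvPowerSeries.coeff_monomial_mul]
  by_cases hle : Finsupp.single i 1 ≤ d
  · rw [if_pos hle, one_mul]
    have h1 : wt (d - Finsupp.single i 1) + 1 = wt d := by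
      have := tsub_add_cancel_of_le hle
      calc wt (d - Finsupp.single i 1) + 1
          = wt (d - Finsupp.single i 1) + wt (Finsupp.single i 1) := by
            congr 1
            simp [wt, Finsupp.single_apply]
        _ = wt d := by rw [← wt_add, this]
    have h2 : k + 1 - wt d ≤ k - wt (d - Finsupp.single i 1) := by omega
    exact dvd_trans (pow_dvd_pow _ h2) (hx _)
  · rw [if_neg hle]
    exact dvd_zero _

lemma Igen_pow_le (k : ℕ) : (Igen p n) ^ k ≤ PredIdeal p n k := by
  induction k with
  | zero => intro x _; intro d; simp
  | succ k ih =>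
    rw [pow_succ]
    refine Ideal.mul_le.mpr (fun s hs r hr => ?_)
    have hsP : Pred p k s := ih hs
    rw [Igen] at hr
    refine Submodule.span_induction ?_ ?_ ?_ ?_ hr
    · rintro x (rfl | ⟨i, rfl⟩)
      · show Pred p (k+1) (s * (p:R))
        rw [mul_comm]
        exact pred_p_mul hsP
      · show Pred p (k+1) (s * MvPowerSeries.X i)
        rw [mul_comm]
        exact pred_X_mul hsP i
    · show Pred p (k+1) (s * 0)
      rw [mul_zero]; exact Pred.zero
    · intro x y _ _ hx hy
      show Pred p (k+1) (s * (x + y))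
      rw [mul_add]; exact Pred.add hx hy
    · intro c x _ hx
      show Pred p (k+1) (s * (c • x))
      have heq : s * (c • x) = c * (s * x) := by rw [smul_eq_mul]; ring
      rw [heq]
      exact Pred.mul_left hx c

end


section
variable {p : ℕ} [Fact p.Prime] {n : ℕ}

local notation "R" => MvPowerSeries (Fin n) ℤ_[p]
local notation "A" => PowerSeries (MvPowerSeries (Fin n) ℤ_[p])

noncomputable def dcoeff (p : ℕ) [Fact p.Prime] {n : ℕ} (j : ℕ) (d : Fin n →₀ ℕ)
    (x : PowerSeries (MvPowerSeries (Fin n) ℤ_[p])) : ℤ_[p] :=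
  MvPowerSeries.coeff d (PowerSeries.coeff j x)

lemma dcoeff_ext {x y : A} (h : ∀ j d, dcoeff p j d x = dcoeff p j d y) : x = y := by
  refine PowerSeries.ext fun j => MvPowerSeries.ext fun d => h j d

lemma dcoeff_add (j : ℕ) (d : Fin n →₀ ℕ) (x y : A) :
    dcoeff p j d (x + y) = dcoeff p j d x + dcoeff p j d y := by
  simp [dcoeff]

lemma dcoeff_neg (j : ℕ) (d : Fin n →₀ ℕ) (x : A) :
    dcoeff p j d (-x) = -dcoeff p j d x := by
  simp [dcoeff]

lemma dcoeff_mul (j : ℕ) (d : Fin n →₀ ℕ) (x y : A) :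
    dcoeff p j d (x * y) = ∑ jj ∈ Finset.HasAntidiagonal.antidiagonal j, ∑ dd ∈ Finset.HasAntidiagonal.antidiagonal d,
      dcoeff p jj.1 dd.1 x * dcoeff p jj.2 dd.2 y := by
  classical
  rw [dcoeff, PowerSeries.coeff_mul, map_sum]
  exact Finset.sum_congr rfl fun jj _ => MvPowerSeries.coeff_mul d _ _

noncomputable def Lim (p : ℕ) [Fact p.Prime] {n : ℕ}
    (F : ℕ → PowerSeries (MvPowerSeries (Fin n) ℤ_[p])) :
    PowerSeries (MvPowerSeries (Fin n) ℤ_[p]) :=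
  PowerSeries.mk fun j => ((fun d => ∑' k, dcoeff p j d (F k)) : MvPowerSeries (Fin n) ℤ_[p])

lemma dcoeff_Lim (F : ℕ → A) (j : ℕ) (d : Fin n →₀ ℕ) :
    dcoeff p j d (Lim p F) = ∑' k, dcoeff p j d (F k) := by
  rw [dcoeff, Lim]
  erw [PowerSeries.coeff_mk]
  rfl

def Gd (p : ℕ) [Fact p.Prime] {n : ℕ} (F : ℕ → PowerSeries (MvPowerSeries (Fin n) ℤ_[p])) : Prop :=
  ∀ j d, Summable fun k => dcoeff p j d (F k)

lemma summable_of_dvd_pow {c : ℕ} {a : ℕ → ℤ_[p]} (h : ∀ k, (p : ℤ_[p]) ^ (k - c) ∣ a k) :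
    Summable a := by
  have hp1 : (1 : ℝ) < (p : ℝ) := by
    exact_mod_cast (Fact.out : p.Prime).one_lt
  have hp0 : (0 : ℝ) < (p : ℝ) := by linarith
  refine Summable.of_norm ?_
  have hgeo : Summable fun k : ℕ => (p : ℝ) ^ c * ((p : ℝ)⁻¹) ^ k := by
    refine Summable.mul_left _ (summable_geometric_of_lt_one (by positivity) ?_)
    rw [inv_lt_one_iff₀]; right; exact hp1
  refine Summable.of_nonneg_of_le (fun k => norm_nonneg _) (fun k => ?_) hgeo
  obtain ⟨b, hb⟩ := h k
  have hnm : ‖a k‖ = ‖((p:ℤ_[p]))^(k-c)‖ * ‖b‖ := by rw [hb, norm_mul]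
  have hnp : ‖((p:ℤ_[p]))^(k-c)‖ = ((p:ℝ)⁻¹) ^ (k - c) := by
    rw [PadicInt.norm_p_pow, zpow_neg, zpow_natCast, inv_pow]
  have hbn : ‖b‖ ≤ 1 := PadicInt.norm_le_one b
  have h1 : ‖a k‖ ≤ ((p:ℝ)⁻¹) ^ (k - c) := by
    rw [hnm, hnp]
    nlinarith [pow_nonneg (inv_nonneg.mpr hp0.le) (k - c), norm_nonneg b]
  refine le_trans h1 ?_
  have h2 : ((p:ℝ)⁻¹) ^ (k - c) * ((p:ℝ)⁻¹) ^ (min k c) = ((p:ℝ)⁻¹) ^ k := by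
    rw [← pow_add]
    congr 1
    omega
  have h3 : ((p:ℝ)⁻¹) ^ (k - c) = (p:ℝ) ^ (min k c) * ((p:ℝ)⁻¹) ^ k := by
    rw [← h2]
    field_simp
    rw [← mul_pow, mul_one_div_cancel hp0.ne', one_pow]
  rw [h3]
  have h4 : (p:ℝ) ^ (min k c) ≤ (p:ℝ) ^ c := pow_le_pow_right₀ hp1.le (Nat.min_le_right k c)
  have h5 : (0:ℝ) ≤ ((p:ℝ)⁻¹) ^ k := by positivity
  nlinarith

lemma Gd.mul_right {F : ℕ → A} (hF : Gd p F) (c : A) : Gd p fun k => F k * c := by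
  intro j d
  have : (fun k => dcoeff p j d (F k * c)) = fun k =>
      ∑ jj ∈ Finset.HasAntidiagonal.antidiagonal j, ∑ dd ∈ Finset.HasAntidiagonal.antidiagonal d,
        dcoeff p jj.1 dd.1 (F k) * dcoeff p jj.2 dd.2 c := by
    funext k; exact dcoeff_mul j d (F k) c
  rw [this]
  exact summable_sum fun jj _ => summable_sum fun dd _ => (hF jj.1 dd.1).mul_right _

lemma Gd.mul_left {F : ℕ → A} (hF : Gd p F) (c : A) : Gd p fun k => c * F k := by
  intro j d
  have : (fun k => dcoeff p j d (c * F k)) = fun k =>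
      ∑ jj ∈ Finset.HasAntidiagonal.antidiagonal j, ∑ dd ∈ Finset.HasAntidiagonal.antidiagonal d,
        dcoeff p jj.1 dd.1 c * dcoeff p jj.2 dd.2 (F k) := by
    funext k; exact dcoeff_mul j d c (F k)
  rw [this]
  exact summable_sum fun jj _ => summable_sum fun dd _ => (hF jj.2 dd.2).mul_left _

lemma Lim_mul_right {F : ℕ → A} (hF : Gd p F) (c : A) :
    Lim p F * c = Lim p fun k => F k * c := by
  refine dcoeff_ext fun j d => ?_
  rw [dcoeff_mul, dcoeff_Lim]
  calc ∑ jj ∈ Finset.HasAntidiagonal.antidiagonal j, ∑ dd ∈ Finset.HasAntidiagonal.antidiagonal d,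
        dcoeff p jj.1 dd.1 (Lim p F) * dcoeff p jj.2 dd.2 c
      = ∑ jj ∈ Finset.HasAntidiagonal.antidiagonal j, ∑ dd ∈ Finset.HasAntidiagonal.antidiagonal d,
        ∑' k, dcoeff p jj.1 dd.1 (F k) * dcoeff p jj.2 dd.2 c := by
        refine Finset.sum_congr rfl fun jj _ => Finset.sum_congr rfl fun dd _ => ?_
        rw [dcoeff_Lim, (hF jj.1 dd.1).tsum_mul_right]
    _ = ∑ jj ∈ Finset.HasAntidiagonal.antidiagonal j, ∑' k, ∑ dd ∈ Finset.HasAntidiagonal.antidiagonal d,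
        dcoeff p jj.1 dd.1 (F k) * dcoeff p jj.2 dd.2 c := by
        refine Finset.sum_congr rfl fun jj _ => ?_
        exact (Summable.tsum_finsetSum (f := fun (dd : (Fin n →₀ ℕ) × (Fin n →₀ ℕ)) (k : ℕ) =>
          dcoeff p jj.1 dd.1 (F k) * dcoeff p jj.2 dd.2 c)
          (fun dd _ => (hF jj.1 dd.1).mul_right _)).symm
    _ = ∑' k, ∑ jj ∈ Finset.HasAntidiagonal.antidiagonal j, ∑ dd ∈ Finset.HasAntidiagonal.antidiagonal d,
        dcoeff p jj.1 dd.1 (F k) * dcoeff p jj.2 dd.2 c :=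
        (Summable.tsum_finsetSum (f := fun (jj : ℕ × ℕ) (k : ℕ) => ∑ dd ∈ Finset.HasAntidiagonal.antidiagonal d,
          dcoeff p jj.1 dd.1 (F k) * dcoeff p jj.2 dd.2 c)
          (fun jj _ => summable_sum fun dd _ => (hF jj.1 dd.1).mul_right _)).symm
    _ = ∑' k, dcoeff p j d (F k * c) :=
        tsum_congr fun k => (dcoeff_mul j d (F k) c).symm

lemma Lim_mul_left {F : ℕ → A} (hF : Gd p F) (c : A) :
    c * Lim p F = Lim p fun k => c * F k := by
  refine dcoeff_ext fun j d => ?_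
  rw [dcoeff_mul, dcoeff_Lim]
  calc ∑ jj ∈ Finset.HasAntidiagonal.antidiagonal j, ∑ dd ∈ Finset.HasAntidiagonal.antidiagonal d,
        dcoeff p jj.1 dd.1 c * dcoeff p jj.2 dd.2 (Lim p F)
      = ∑ jj ∈ Finset.HasAntidiagonal.antidiagonal j, ∑ dd ∈ Finset.HasAntidiagonal.antidiagonal d,
        ∑' k, dcoeff p jj.1 dd.1 c * dcoeff p jj.2 dd.2 (F k) := by
        refine Finset.sum_congr rfl fun jj _ => Finset.sum_congr rfl fun dd _ => ?_
        rw [dcoeff_Lim, (hF jj.2 dd.2).tsum_mul_left]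
    _ = ∑ jj ∈ Finset.HasAntidiagonal.antidiagonal j, ∑' k, ∑ dd ∈ Finset.HasAntidiagonal.antidiagonal d,
        dcoeff p jj.1 dd.1 c * dcoeff p jj.2 dd.2 (F k) := by
        refine Finset.sum_congr rfl fun jj _ => ?_
        exact (Summable.tsum_finsetSum (f := fun (dd : (Fin n →₀ ℕ) × (Fin n →₀ ℕ)) (k : ℕ) =>
          dcoeff p jj.1 dd.1 c * dcoeff p jj.2 dd.2 (F k))
          (fun dd _ => (hF jj.2 dd.2).mul_left _)).symm
    _ = ∑' k, ∑ jj ∈ Finset.HasAntidiagonal.antidiagonal j, ∑ dd ∈ Finset.HasAntidiagonal.antidiagonal d,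
        dcoeff p jj.1 dd.1 c * dcoeff p jj.2 dd.2 (F k) :=
        (Summable.tsum_finsetSum (f := fun (jj : ℕ × ℕ) (k : ℕ) => ∑ dd ∈ Finset.HasAntidiagonal.antidiagonal d,
          dcoeff p jj.1 dd.1 c * dcoeff p jj.2 dd.2 (F k))
          (fun jj _ => summable_sum fun dd _ => (hF jj.2 dd.2).mul_left _)).symm
    _ = ∑' k, dcoeff p j d (c * F k) :=
        tsum_congr fun k => (dcoeff_mul j d c (F k)).symm

lemma Lim_neg (F : ℕ → A) : Lim p (fun k => -(F k)) = -(Lim p F) := by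
  refine dcoeff_ext fun j d => ?_
  rw [dcoeff_Lim, dcoeff_neg, dcoeff_Lim, ← tsum_neg]
  exact tsum_congr fun k => dcoeff_neg j d (F k)

lemma Lim_succ {F : ℕ → A} (hF : Gd p F) :
    Lim p F = F 0 + Lim p (fun k => F (k + 1)) := by
  refine dcoeff_ext fun j d => ?_
  rw [dcoeff_Lim, dcoeff_add, dcoeff_Lim]
  exact Summable.tsum_eq_zero_add (hF j d)

noncomputable def tauS (lam : ℕ) (x : A) : A :=
  PowerSeries.mk fun j => PowerSeries.coeff (j + lam) x

lemma dcoeff_tauS (lam j : ℕ) (d : Fin n →₀ ℕ) (x : A) :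
    dcoeff p j d (tauS lam x) = dcoeff p (j + lam) d x := by
  rw [dcoeff, tauS, PowerSeries.coeff_mk, dcoeff]

lemma tauS_Lim (lam : ℕ) (F : ℕ → A) :
    tauS lam (Lim p F) = Lim p fun k => tauS lam (F k) := by
  refine dcoeff_ext fun j d => ?_
  rw [dcoeff_tauS, dcoeff_Lim, dcoeff_Lim]
  exact tsum_congr fun k => (dcoeff_tauS lam j d (F k)).symm

lemma Gd.tau {F : ℕ → A} (hF : Gd p F) (lam : ℕ) : Gd p fun k => tauS lam (F k) := by
  intro j d
  have : (fun k => dcoeff p j d (tauS lam (F k))) = fun k => dcoeff p (j + lam) d (F k) :=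
    funext fun k => dcoeff_tauS lam j d (F k)
  rw [this]
  exact hF (j + lam) d

lemma Gd.neg {F : ℕ → A} (hF : Gd p F) : Gd p fun k => -(F k) := by
  intro j d
  have : (fun k => dcoeff p j d (-(F k))) = fun k => -dcoeff p j d (F k) :=
    funext fun k => dcoeff_neg j d (F k)
  rw [this]
  exact (hF j d).neg

lemma tauS_add (lam : ℕ) (x y : A) : tauS lam (x + y) = tauS lam x + tauS lam y := by
  refine dcoeff_ext fun j d => ?_
  rw [dcoeff_tauS, dcoeff_add, dcoeff_add, dcoeff_tauS, dcoeff_tauS]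

lemma tauS_X_pow_mul (lam : ℕ) (x : A) : tauS lam (PowerSeries.X ^ lam * x) = x := by
  refine dcoeff_ext fun j d => ?_
  rw [dcoeff_tauS, dcoeff, PowerSeries.coeff_X_pow_mul]
  rfl

end

section MainW
variable {p : ℕ} [Fact p.Prime] {n : ℕ}

local notation "Rr" => MvPowerSeries (Fin n) ℤ_[p]
local notation "Aa" => PowerSeries (MvPowerSeries (Fin n) ℤ_[p])

lemma isUnit_of_not_dvd {x : ℤ_[p]} (h : ¬ (p:ℤ_[p]) ∣ x) : IsUnit x := by
  by_contra hx
  exact h ((PadicInt.norm_lt_one_iff_dvd x).mp (PadicInt.not_isUnit_iff.mp hx))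

lemma not_isUnit_p : ¬ IsUnit (p : ℤ_[p]) := by
  rw [PadicInt.not_isUnit_iff, PadicInt.norm_p]
  have h1 : (1:ℝ) < p := by exact_mod_cast (Fact.out : p.Prime).one_lt
  rw [inv_lt_one_iff₀]
  right; exact h1

lemma isUnit_one_sub {w : ℤ_[p]} (h : (p:ℤ_[p]) ∣ w) : IsUnit (1 - w) := by
  by_contra hx
  have h1 : (p:ℤ_[p]) ∣ (1 - w) :=
    (PadicInt.norm_lt_one_iff_dvd _).mp (PadicInt.not_isUnit_iff.mp hx)
  have h2 : (p:ℤ_[p]) ∣ 1 := by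
    have := dvd_add h1 h
    simpa using this
  exact not_isUnit_p (isUnit_of_dvd_one h2)

lemma bdd_of_dvd {x : ℤ_[p]} (hx : x ≠ 0) {m : ℕ} (h : (p:ℤ_[p])^m ∣ x) :
    m ≤ x.valuation := by
  have h1 : x ∈ (Ideal.span {(p:ℤ_[p])^m} : Ideal ℤ_[p]) := by
    rw [Ideal.mem_span_singleton]; exact h
  have h2 := (PadicInt.norm_le_pow_iff_mem_span_pow x m).mpr h1
  have h3 := (PadicInt.norm_le_pow_iff_le_valuation x hx m).mp h2
  exact h3

lemma pcast_pow_mul_coeff (e j : ℕ) (h : Aa) :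
    PowerSeries.coeff j ((p:Aa)^e * h) = (p:Rr)^e * PowerSeries.coeff j h := by
  have h1 : ((p:Aa))^e = PowerSeries.C ((p:Rr)^e) := by
    rw [map_pow, map_natCast]
  rw [h1, PowerSeries.coeff_C_mul]

lemma dcoeff_pcast_pow_mul (e j : ℕ) (d : Fin n →₀ ℕ) (h : Aa) :
    dcoeff p j d ((p:Aa)^e * h) = (p:ℤ_[p])^e * dcoeff p j d h := by
  rw [dcoeff, pcast_pow_mul_coeff]
  have h2 : ((p:Rr))^e = MvPowerSeries.C ((p:ℤ_[p])^e) := by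
    rw [map_pow, map_natCast]
  rw [h2, MvPowerSeries.coeff_C_mul]
  rfl

lemma pcast_pow_mul_coeffZ (e j : ℕ) (h : PowerSeries ℤ_[p]) :
    PowerSeries.coeff j ((p:PowerSeries ℤ_[p])^e * h)
      = (p:ℤ_[p])^e * PowerSeries.coeff j h := by
  have h1 : ((p:PowerSeries ℤ_[p]))^e = PowerSeries.C ((p:ℤ_[p])^e) := by
    rw [map_pow, map_natCast]
  rw [h1, PowerSeries.coeff_C_mul]

lemma coeff_mul_mem (J : Ideal (MvPowerSeries (Fin n) ℤ_[p])) (x y : Aa)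
    (hy : ∀ j, PowerSeries.coeff j y ∈ J) (j : ℕ) :
    PowerSeries.coeff j (x * y) ∈ J := by
  classical
  rw [PowerSeries.coeff_mul]
  exact Ideal.sum_mem _ fun jj _ => Ideal.mul_mem_left _ _ (hy jj.2)

lemma coeff_lowsum (lam : ℕ) (b : ℕ → MvPowerSeries (Fin n) ℤ_[p]) (j : ℕ) :
    PowerSeries.coeff j
      (∑ i ∈ Finset.range lam, PowerSeries.C (b i)
        * PowerSeries.X ^ i)
      = if j < lam then b j else 0 := by
  classical
  rw [map_sum]
  by_cases hj : j < lam
  · rw [if_pos hj, Finset.sum_eq_single_of_mem j (Finset.mem_range.mpr hj)]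
    · rw [PowerSeries.coeff_C_mul_X_pow, if_pos rfl]
    · intro i _ hne
      rw [PowerSeries.coeff_C_mul_X_pow, if_neg (fun e => hne e.symm)]
  · rw [if_neg hj]
    refine Finset.sum_eq_zero fun i hi => ?_
    rw [PowerSeries.coeff_C_mul_X_pow, if_neg (fun e => hj (by rw [e]; exact Finset.mem_range.mp hi))]

lemma coeff_tauS (lam j : ℕ) (x : Aa) :
    PowerSeries.coeff j (tauS lam x) = PowerSeries.coeff (j + lam) x :=
  PowerSeries.coeff_mk _ _

theorem weier_aux (f : Aa) (hf : f ≠ 0)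
    (hf0 : PowerSeries.map (MvPowerSeries.constantCoeff) f ≠ 0)
    (hmu : mu p (PowerSeries.map (MvPowerSeries.constantCoeff) f) = mu p f) :
    ∃ (lam : ℕ) (u : PowerSeries (MvPowerSeries (Fin n) ℤ_[p]))
      (a : ℕ → MvPowerSeries (Fin n) ℤ_[p]),
      IsUnit u ∧
      (∀ i < lam, a i ∈ Ideal.span
        (insert ((p : MvPowerSeries (Fin n) ℤ_[p]))
          (Set.range (MvPowerSeries.X : Fin n → MvPowerSeries (Fin n) ℤ_[p])))) ∧
      f = (p : PowerSeries (MvPowerSeries (Fin n) ℤ_[p])) ^ (mu p f) *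
        (u * (PowerSeries.X ^ lam +
          ∑ i ∈ Finset.range lam,
            PowerSeries.C (a i) * PowerSeries.X ^ i)) := by
  classical
  set μ := mu p f with hμdef
  have hexc : ∃ j d, dcoeff p j d f ≠ 0 := by
    by_contra hc
    push_neg at hc
    exact hf (dcoeff_ext fun j d => by rw [hc j d]; simp [dcoeff])
  obtain ⟨j₀, d₀, hjd⟩ := hexc
  have hdvd_imp : ∀ m : ℕ, (p:Aa)^m ∣ f → (p:ℤ_[p])^m ∣ dcoeff p j₀ d₀ f := by
    rintro m ⟨h, hh⟩
    rw [hh, dcoeff_pcast_pow_mul]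
    exact Dvd.intro _ rfl
  have hbdd : BddAbove {m : ℕ | (p:Aa)^m ∣ f} :=
    ⟨(dcoeff p j₀ d₀ f).valuation, fun m hm => bdd_of_dvd hjd (hdvd_imp m hm)⟩
  have hne : ({m : ℕ | (p:Aa)^m ∣ f}).Nonempty := ⟨0, by simp⟩
  have hmueq : mu p f = sSup {m : ℕ | (p:Aa)^m ∣ f} := rfl
  have hμmem : (p:Aa)^μ ∣ f := by
    have h := Nat.sSup_mem hne hbdd
    rwa [← hmueq, ← hμdef] at h
  set f₀ := PowerSeries.map (MvPowerSeries.constantCoeff) f with hf₀def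
  have hexc0 : ∃ j, PowerSeries.coeff j f₀ ≠ 0 := by
    by_contra hc; push_neg at hc
    exact hf0 (PowerSeries.ext fun j => by rw [hc j]; simp)
  obtain ⟨j₁, hj₁⟩ := hexc0
  have hdvd_imp0 : ∀ m : ℕ, (p:PowerSeries ℤ_[p])^m ∣ f₀ →
      (p:ℤ_[p])^m ∣ PowerSeries.coeff j₁ f₀ := by
    rintro m ⟨h, hh⟩
    rw [hh, pcast_pow_mul_coeffZ]
    exact Dvd.intro _ rfl
  have hbdd0 : BddAbove {m : ℕ | (p:PowerSeries ℤ_[p])^m ∣ f₀} :=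
    ⟨(PowerSeries.coeff j₁ f₀).valuation,
      fun m hm => bdd_of_dvd hj₁ (hdvd_imp0 m hm)⟩
  have hmueq0 : mu p f₀ = sSup {m : ℕ | (p:PowerSeries ℤ_[p])^m ∣ f₀} := rfl
  have hnot0 : ¬ (p:PowerSeries ℤ_[p])^(μ+1) ∣ f₀ := by
    intro hdvd
    have h1 : μ + 1 ≤ sSup {m : ℕ | (p:PowerSeries ℤ_[p])^m ∣ f₀} := le_csSup hbdd0 hdvd
    rw [← hmueq0, hmu] at h1
    omega
  obtain ⟨g, hg⟩ := hμmem
  set g₀ := PowerSeries.map (MvPowerSeries.constantCoeff) g with hg₀def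
  have hf₀g₀ : f₀ = (p:PowerSeries ℤ_[p])^μ * g₀ := by
    rw [hf₀def, hg, map_mul, map_pow, map_natCast, ← hg₀def]
  have hpg0 : ¬ (p:PowerSeries ℤ_[p]) ∣ g₀ := by
    rintro ⟨h, hh⟩
    apply hnot0
    rw [hf₀g₀, hh]
    exact ⟨h, by ring⟩
  have hex : ∃ j, ¬ (p:ℤ_[p]) ∣ PowerSeries.coeff j g₀ := by
    by_contra hc; push_neg at hc
    apply hpg0
    refine ⟨PowerSeries.mk fun j => Classical.choose (hc j), ?_⟩
    refine PowerSeries.ext fun j => ?_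
    have h1 : (p : PowerSeries ℤ_[p]) = PowerSeries.C (p:ℤ_[p]) := by rw [map_natCast]
    rw [h1, PowerSeries.coeff_C_mul, PowerSeries.coeff_mk]
    exact Classical.choose_spec (hc j)
  set lam := Nat.find hex with hlamdef
  have hlam : ¬ (p:ℤ_[p]) ∣ PowerSeries.coeff lam g₀ := Nat.find_spec hex
  have hmin : ∀ i, i < lam → (p:ℤ_[p]) ∣ PowerSeries.coeff i g₀ :=
    fun i hi => not_not.mp (Nat.find_min hex hi)
  have hcmap : ∀ j, PowerSeries.coeff j g₀
      = MvPowerSeries.constantCoeff (PowerSeries.coeff j g) := by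
    intro j; rw [hg₀def, PowerSeries.coeff_map]
  set Q := tauS lam g with hQdef
  set P := ∑ i ∈ Finset.range lam,
    PowerSeries.C (PowerSeries.coeff i g) * PowerSeries.X ^ i
    with hPdef
  have hPcoeff : ∀ j, PowerSeries.coeff j P
      = if j < lam then PowerSeries.coeff j g else 0 := by
    intro j; rw [hPdef]; exact coeff_lowsum lam _ j
  have hsplit : g = P + PowerSeries.X ^ lam * Q := by
    refine PowerSeries.ext fun j => ?_
    rw [map_add, hPcoeff j, PowerSeries.coeff_X_pow_mul', hQdef, coeff_tauS]
    by_cases hj : j < lam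
    · rw [if_pos hj, if_neg (by omega), add_zero]
    · rw [if_neg hj, if_pos (by omega), zero_add, Nat.sub_add_cancel (by omega)]
  have hQc : PowerSeries.constantCoeff Q = PowerSeries.coeff lam g := by
    rw [← PowerSeries.coeff_zero_eq_constantCoeff_apply, hQdef, coeff_tauS, zero_add]
  have hQu : IsUnit (PowerSeries.constantCoeff Q) := by
    rw [hQc]
    refine MvPowerSeries.isUnit_iff_constantCoeff.mpr ?_
    rw [← hcmap lam]
    exact isUnit_of_not_dvd hlam
  obtain ⟨uQ, huQ⟩ := hQu
  set Qinv := PowerSeries.invOfUnit Q uQ with hQinvdef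
  have hQQinv : Q * Qinv = 1 := PowerSeries.mul_invOfUnit Q uQ huQ.symm
  have hPmem : ∀ j, PowerSeries.coeff j P ∈ Igen p n := by
    intro j; rw [hPcoeff j]
    by_cases hj : j < lam
    · rw [if_pos hj]
      refine mem_Igen_iff.mpr ?_
      rw [← hcmap j]
      exact hmin j hj
    · rw [if_neg hj]; exact Ideal.zero_mem _
  set x : ℕ → Aa := fun k => Nat.rec (motive := fun _ => Aa) Qinv
    (fun _ xk => -(Qinv * tauS lam (xk * P))) k with hxdef
  have hx0 : x 0 = Qinv := rfl
  have hxs : ∀ k, x (k+1) = -(Qinv * tauS lam (x k * P)) := fun k => rfl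
  have hIk : ∀ k, ∀ j, PowerSeries.coeff j (x k) ∈ (Igen p n)^k := by
    intro k
    induction k with
    | zero =>
      intro j; rw [pow_zero, Ideal.one_eq_top]; exact Submodule.mem_top
    | succ k ih =>
      intro j
      rw [hxs k, map_neg]
      refine neg_mem ?_
      refine coeff_mul_mem _ _ _ (fun j' => ?_) j
      rw [coeff_tauS, PowerSeries.coeff_mul]
      refine Ideal.sum_mem _ fun jj _ => ?_
      rw [pow_succ]
      exact Ideal.mul_mem_mul (ih jj.1) (hPmem jj.2)
  have hGdx : Gd p x := fun j d =>
    summable_of_dvd_pow (c := wt d) fun k => Igen_pow_le k (hIk k j) d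
  set q := Lim p x with hqdef
  have hGd1 : Gd p fun k => x k * P := hGdx.mul_right P
  have hGd2 : Gd p fun k => tauS lam (x k * P) := hGd1.tau lam
  have hfix : q = Qinv - Qinv * tauS lam (q * P) := by
    calc q = x 0 + Lim p (fun k => x (k+1)) := by rw [hqdef]; exact Lim_succ hGdx
      _ = Qinv + Lim p (fun k => -(Qinv * tauS lam (x k * P))) := by
          rw [hx0, show (fun k => x (k+1)) = fun k => -(Qinv * tauS lam (x k * P)) from
            funext hxs]
      _ = Qinv - Lim p (fun k => Qinv * tauS lam (x k * P)) := by
          rw [Lim_neg (F := fun k => Qinv * tauS lam (x k * P))]; ring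
      _ = Qinv - Qinv * Lim p (fun k => tauS lam (x k * P)) := by
          rw [Lim_mul_left hGd2 Qinv]
      _ = Qinv - Qinv * tauS lam (Lim p (fun k => x k * P)) := by
          rw [tauS_Lim]
      _ = Qinv - Qinv * tauS lam (Lim p x * P) := by
          rw [← Lim_mul_right hGdx P]
      _ = Qinv - Qinv * tauS lam (q * P) := by rw [← hqdef]
  have htau1 : tauS lam (q * g) = 1 := by
    have h1 : q * g = q * P + PowerSeries.X ^ lam * (q * Q) := by
      rw [hsplit]; ring
    rw [h1, tauS_add, tauS_X_pow_mul]
    have h3 : Q * q = Q * (Qinv - Qinv * tauS lam (q * P)) := by rw [← hfix]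
    have h2 : Q * q = 1 - tauS lam (q * P) := by
      rw [h3, mul_sub, ← mul_assoc, hQQinv, one_mul]
    rw [mul_comm q Q, h2]
    ring
  set a : ℕ → MvPowerSeries (Fin n) ℤ_[p] := fun i => PowerSeries.coeff i (q * g) with hadef
  have hW : q * g = PowerSeries.X ^ lam + ∑ i ∈ Finset.range lam,
      PowerSeries.C (a i) * PowerSeries.X ^ i := by
    refine PowerSeries.ext fun j => ?_
    rw [map_add, coeff_lowsum, PowerSeries.coeff_X_pow]
    by_cases hj : j < lam
    · rw [if_neg (by omega : ¬ j = lam), if_pos hj, zero_add]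
    · rw [if_neg hj, add_zero]
      have h4 : j - lam + lam = j := by omega
      have h5 : PowerSeries.coeff j (q*g) = PowerSeries.coeff (j - lam + lam) (q*g) := by
        rw [h4]
      rw [h5, ← coeff_tauS, htau1, PowerSeries.coeff_one]
      by_cases hj2 : j = lam
      · rw [if_pos (by omega : j - lam = 0), if_pos hj2]
      · rw [if_neg (by omega : ¬ j - lam = 0), if_neg hj2]
  have ha : ∀ i, i < lam → a i ∈ Igen p n := by
    intro i hi
    simp only [hadef]
    rw [PowerSeries.coeff_mul]
    refine Ideal.sum_mem _ fun jj hjj => ?_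
    refine Ideal.mul_mem_left _ _ ?_
    refine mem_Igen_iff.mpr ?_
    rw [← hcmap jj.2]
    refine hmin jj.2 ?_
    have := Finset.HasAntidiagonal.mem_antidiagonal.mp hjj
    omega
  have htP : PowerSeries.constantCoeff (tauS lam (q * P)) ∈ Igen p n := by
    rw [← PowerSeries.coeff_zero_eq_constantCoeff_apply, coeff_tauS, zero_add]
    exact coeff_mul_mem _ _ _ hPmem lam
  have hdvdw : (p:ℤ_[p]) ∣ MvPowerSeries.constantCoeff
      (PowerSeries.constantCoeff (tauS lam (q * P))) := mem_Igen_iff.mp htP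
  have hQinvc : IsUnit (MvPowerSeries.constantCoeff
      (PowerSeries.constantCoeff Qinv)) := by
    have h6 := congrArg (fun z : Aa => MvPowerSeries.constantCoeff
      (PowerSeries.constantCoeff z)) hQQinv
    simp only [map_mul, map_one] at h6
    exact IsUnit.of_mul_eq_one _ ((mul_comm _ _).trans h6)
  have hqunit : IsUnit q := by
    refine PowerSeries.isUnit_iff_constantCoeff.mpr ?_
    refine MvPowerSeries.isUnit_iff_constantCoeff.mpr ?_
    have h7 := congrArg (fun z : Aa => MvPowerSeries.constantCoeff
      (PowerSeries.constantCoeff z)) hfix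
    simp only [map_sub, map_mul] at h7
    have h8 : MvPowerSeries.constantCoeff (PowerSeries.constantCoeff q)
        = (MvPowerSeries.constantCoeff (PowerSeries.constantCoeff Qinv))
          * (1 - MvPowerSeries.constantCoeff
              (PowerSeries.constantCoeff (tauS lam (q * P)))) := by
      rw [h7]; ring
    rw [h8]
    exact hQinvc.mul (isUnit_one_sub hdvdw)
  obtain ⟨U, hU⟩ := hqunit
  refine ⟨lam, ↑U⁻¹, a, Units.isUnit _, fun i hi => by simpa [Igen] using ha i hi, ?_⟩
  have hgW : g = ((U⁻¹ : (PowerSeries (MvPowerSeries (Fin n) ℤ_[p]))ˣ) :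
      PowerSeries (MvPowerSeries (Fin n) ℤ_[p])) * (PowerSeries.X ^ lam + ∑ i ∈ Finset.range lam,
      PowerSeries.C (a i) * PowerSeries.X ^ i) := by
    rw [← hW, ← hU, ← mul_assoc, Units.inv_mul, one_mul]
  rw [hg, hgW]

end MainW


/-- Weierstrass preparation for `f ∈ ℤ_p[[t₀,…,t_n]]` under the hypothesis
`μ(f(t₀,0,…,0)) = μ(f)`.  Here `ℤ_p[[t₀,…,t_n]]` is modelled as
`(ℤ_p[[t₁,…,t_n]])[[t₀]]`, and `f(t₀,0,…,0)` is obtained by applying the constant-coefficient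
map `ℤ_p[[t₁,…,t_n]] → ℤ_p` to each coefficient of `f` (as a series in `t₀`). -/
theorem stmt_0 (p : ℕ) [Fact p.Prime] (n : ℕ)
    (f : PowerSeries (MvPowerSeries (Fin n) ℤ_[p]))
    (hf : f ≠ 0)
    (hf0 : PowerSeries.map (MvPowerSeries.constantCoeff) f ≠ 0)
    (hmu : mu p (PowerSeries.map (MvPowerSeries.constantCoeff) f) = mu p f) :
    ∃ (lam : ℕ) (u : PowerSeries (MvPowerSeries (Fin n) ℤ_[p]))
      (a : ℕ → MvPowerSeries (Fin n) ℤ_[p]),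
      IsUnit u ∧
      (∀ i < lam, a i ∈ Ideal.span
        (insert ((p : MvPowerSeries (Fin n) ℤ_[p]))
          (Set.range (MvPowerSeries.X : Fin n → MvPowerSeries (Fin n) ℤ_[p])))) ∧
      f = (p : PowerSeries (MvPowerSeries (Fin n) ℤ_[p])) ^ (mu p f) *
        (u * (PowerSeries.X ^ lam +
          ∑ i ∈ Finset.range lam,
            PowerSeries.C (a i) * PowerSeries.X ^ i)) := by
  exact weier_aux f hf hf0 hmu
end

section
/- Let p be a prime, let 𝒪 be the ring of integers of a finite field extension of ℚ_p with uniformizer π, and let f ∈ 𝒪[[T]] be a formal power series not divisible by π. Then the set of p-power roots of unity ζ such that ord_p(f(ζ−1)) ≥ ord_p(π) is finite, where f(ζ−1) is the value of f at ζ−1 in the ring of integers of the compositum Frac(𝒪)(ζ), and ord_p is the valuation on the algebraic closure of ℚ_p normalized by ord_p(p) = 1. -/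
/-- `EvalsTo φ f x y` says that `y` is the value `f(x)` of the power series `f`
(with coefficients pushed forward along `φ`): for every `N`, `y` agrees with the `N`-th
partial sum of `∑ φ(aₙ)xⁿ` modulo `x^N`. -/
def EvalsTo {R S : Type*} [CommRing R] [CommRing S] (φ : R →+* S)
    (f : PowerSeries R) (x y : S) : Prop :=
  ∀ N : ℕ, x ^ N ∣ (y - ∑ n ∈ Finset.range N, φ (PowerSeries.coeff n f) * x ^ n)

variable (p : ℕ) [Fact p.Prime]
variable (K : Type*) [Field K] [Algebra ℚ_[p] K]
  [Algebra ℤ_[p] K] [IsScalarTower ℤ_[p] ℚ_[p] K]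

/-- The canonical map from the ring of integers `𝒪` of `K` (the integral closure of `ℤ_p`
in `K`) to the integral closure of `ℤ_p` in an algebraic closure of `K`. -/
noncomputable def toClosure :
    integralClosure ℤ_[p] K →+* integralClosure ℤ_[p] (AlgebraicClosure K) :=
  (((IsScalarTower.toAlgHom ℤ_[p] K (AlgebraicClosure K)).comp
      (integralClosure ℤ_[p] K).val).codRestrict
    (integralClosure ℤ_[p] (AlgebraicClosure K))
    (fun x => IsIntegral.map (IsScalarTower.toAlgHom ℤ_[p] K (AlgebraicClosure K))
      x.2)).toRingHom


open Polynomial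

set_option linter.unusedSectionVars false
set_option maxHeartbeats 1000000
set_option synthInstance.maxHeartbeats 400000

namespace Stmt3Aux

/-- In a finite monoid, some positive power of every element is idempotent. -/
theorem exists_pow_sq_eq {Q : Type*} [Monoid Q] [Finite Q] (b : Q) :
    ∃ n : ℕ, 0 < n ∧ b ^ (2 * n) = b ^ n := by
  obtain ⟨i, j, hne, hij⟩ := Finite.exists_ne_map_eq_of_infinite (fun n : ℕ => b ^ (n + 1))
  wlog hlt : i < j generalizing i j
  · exact this j i hne.symm hij.symm (by omega)
  have hij' : b ^ (i + 1) = b ^ (j + 1) := hij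
  set I := i + 1 with hI
  set t := j - i with ht
  have ht0 : 0 < t := by omega
  have step : ∀ m, I ≤ m → b ^ (m + t) = b ^ m := by
    intro m hm
    have h1 : m + t = (m - I) + (j + 1) := by omega
    have h2 : m = (m - I) + I := by omega
    rw [h1, pow_add, ← hij', ← pow_add, ← h2]
  have iter : ∀ k m, I ≤ m → b ^ (m + k * t) = b ^ m := by
    intro k
    induction k with
    | zero => simp
    | succ k ih =>
      intro m hm
      have h1 : m + (k + 1) * t = (m + k * t) + t := by ring
      rw [h1, step _ (by omega), ih m hm]
  refine ⟨I * t, by positivity, ?_⟩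
  have h2 : 2 * (I * t) = I * t + I * t := by ring
  rw [h2, iter I (I * t) (Nat.le_mul_of_pos_right I ht0)]

/-- In a domain, if `ζ` is a primitive `p^k`-th root of unity (`k ≥ 1`), then
`p = (ζ - 1) ^ φ(p^k) * U` for a unit `U`. -/
theorem p_eq_sub_one_pow_mul_unit {R : Type*} [CommRing R] [IsDomain R]
    (p : ℕ) [Fact p.Prime] {k : ℕ} (hk : 1 ≤ k) {ζ : R}
    (hprim : IsPrimitiveRoot ζ (p ^ k)) :
    ∃ U : R, IsUnit U ∧ ((p : ℕ) : R) = (ζ - 1) ^ (p ^ k).totient * U := by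
  classical
  have hp : p.Prime := Fact.out
  have hpk1 : 1 < p ^ k := by
    calc 1 < p := hp.one_lt
    _ ≤ p ^ k := Nat.le_self_pow (by omega) p
  haveI : NeZero (p ^ k) := ⟨by positivity⟩
  have hζ1 : ζ ≠ 1 := by
    intro h
    have hdvd := hprim.dvd_of_pow_eq_one 1 (by rw [h, one_pow])
    exact absurd (Nat.le_of_dvd one_pos hdvd) (by omega)
  have hζ1' : (1 : R) - ζ ≠ 0 := sub_ne_zero.mpr (Ne.symm hζ1)
  obtain ⟨k', rfl⟩ : ∃ k', k = k' + 1 := ⟨k - 1, by omega⟩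
  have hcyc : eval 1 (cyclotomic (p ^ (k' + 1)) R) = ((p : ℕ) : R) :=
    eval_one_cyclotomic_prime_pow k'
  have hprod : cyclotomic (p ^ (k' + 1)) R = ∏ μ ∈ primitiveRoots (p ^ (k' + 1)) R, (X - C μ) :=
    cyclotomic_eq_prod_X_sub_primitiveRoots hprim
  have hpeq : ((p : ℕ) : R) = ∏ μ ∈ primitiveRoots (p ^ (k' + 1)) R, (1 - μ) := by
    rw [← hcyc, hprod, eval_prod]
    exact Finset.prod_congr rfl fun μ _ => by rw [eval_sub, eval_X, eval_C]
  have key : ∀ μ ∈ primitiveRoots (p ^ (k' + 1)) R,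
      ∃ t : R, IsUnit t ∧ (1 - μ) = (ζ - 1) * t := by
    intro μ hμmem
    have hμ : IsPrimitiveRoot μ (p ^ (k' + 1)) :=
      (mem_primitiveRoots (by positivity)).mp hμmem
    obtain ⟨i, _, hi⟩ := hprim.eq_pow_of_pow_eq_one hμ.pow_eq_one
    obtain ⟨j, _, hj⟩ := hμ.eq_pow_of_pow_eq_one hprim.pow_eq_one
    have div1 : (ζ - 1) ∣ (1 - μ) := by
      have h1 := sub_dvd_pow_sub_pow ζ 1 i
      rw [one_pow, hi] at h1
      rw [← neg_sub μ 1]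
      exact dvd_neg.mpr h1
    have div2 : (1 - μ) ∣ (1 - ζ) := by
      have h1 := sub_dvd_pow_sub_pow μ 1 j
      rw [one_pow, hj] at h1
      rw [← neg_sub ζ 1, ← neg_sub μ 1, neg_dvd, dvd_neg]
      exact h1
    obtain ⟨t, ht⟩ := div1
    obtain ⟨s, hs⟩ := div2
    have hzero : (1 - ζ) * (1 + t * s) = 0 := by linear_combination hs + s * ht
    have hts : 1 + t * s = 0 := by
      rcases mul_eq_zero.mp hzero with h | h
      · exact absurd h hζ1'
      · exact h
    exact ⟨t, IsUnit.of_mul_eq_one (a := t) (-s) (by linear_combination -hts), ht⟩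
  set S := primitiveRoots (p ^ (k' + 1)) R with hS
  set T : R → R := fun μ =>
    if h : ∃ t : R, IsUnit t ∧ (1 - μ) = (ζ - 1) * t then h.choose else 1 with hT
  have hTu : ∀ μ ∈ S, IsUnit (T μ) := by
    intro μ hμ
    have h := key μ hμ
    rw [hT]
    simp only [dif_pos h]
    exact h.choose_spec.1
  have hTeq : ∀ μ ∈ S, (1 - μ) = (ζ - 1) * T μ := by
    intro μ hμ
    have h := key μ hμ
    rw [hT]
    simp only [dif_pos h]
    exact h.choose_spec.2
  refine ⟨∏ μ ∈ S, T μ, ?_, ?_⟩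
  · exact Finset.prod_induction T IsUnit (fun a b ha hb => ha.mul hb) isUnit_one hTu
  · rw [hpeq, Finset.prod_congr rfl hTeq, Finset.prod_mul_distrib, Finset.prod_const,
      hprim.card_primitiveRoots]

section PAux

variable (p : ℕ) [Fact p.Prime]

theorem smod_iff_dvd_zp (x y : ℤ_[p]) (n : ℕ) :
    x ≡ y [SMOD ((IsLocalRing.maximalIdeal ℤ_[p]) ^ n • ⊤ : Submodule ℤ_[p] ℤ_[p])] ↔
      ((p : ℕ) : ℤ_[p]) ^ n ∣ x - y := by
  rw [SModEq.sub_mem]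
  simp only [← Ideal.one_eq_top, smul_eq_mul, mul_one]
  rw [PadicInt.maximalIdeal_eq_span_p, Ideal.span_singleton_pow, Ideal.mem_span_singleton]

variable (A : Type*) [CommRing A] [Algebra ℤ_[p] A]
variable {ι : Type*} [Fintype ι]

theorem dvd_iff_coords (e : Module.Basis ι ℤ_[p] A) (n : ℕ) (x : A) :
    ((p : ℕ) : A) ^ n ∣ x ↔ ∀ i, ((p : ℕ) : ℤ_[p]) ^ n ∣ e.equivFun x i := by
  have key : ∀ (c : ℤ_[p]) (y : A), (algebraMap ℤ_[p] A c) * y = c • y :=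
    fun c y => (Algebra.smul_def c y).symm
  have hcast : (((p : ℕ) : A)) ^ n = algebraMap ℤ_[p] A (((p : ℕ) : ℤ_[p]) ^ n) := by
    rw [map_pow, map_natCast]
  constructor
  · rintro ⟨y, rfl⟩ i
    rw [hcast, key, map_smul]
    exact ⟨e.equivFun y i, rfl⟩
  · intro hco
    choose t ht using hco
    have hx : x = ((p : ℕ) : ℤ_[p]) ^ n • e.equivFun.symm t := by
      apply e.equivFun.injective
      rw [map_smul, e.equivFun.apply_symm_apply]
      funext i
      rw [Pi.smul_apply, smul_eq_mul]
      exact ht i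
    exact ⟨e.equivFun.symm t, by rw [hcast, key, ← hx]⟩

theorem smod_iff_dvd (x y : A) (n : ℕ) :
    x ≡ y [SMOD ((Ideal.span {((p : ℕ) : A)}) ^ n • ⊤ : Submodule A A)] ↔
      ((p : ℕ) : A) ^ n ∣ x - y := by
  rw [SModEq.sub_mem]
  simp only [← Ideal.one_eq_top, smul_eq_mul, mul_one]
  rw [Ideal.span_singleton_pow, Ideal.mem_span_singleton]

theorem adicA (e : Module.Basis ι ℤ_[p] A) : IsAdicComplete (Ideal.span {((p : ℕ) : A)}) A := by
  have hH : IsHausdorff (Ideal.span {((p : ℕ) : A)}) A := by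
    constructor
    intro x hx
    have hco : ∀ n : ℕ, ∀ i, ((p : ℕ) : ℤ_[p]) ^ n ∣ e.equivFun x i := by
      intro n
      rw [← dvd_iff_coords p A e n x]
      have := (smod_iff_dvd p A x 0 n).mp (hx n)
      simpa using this
    have hz : e.equivFun x = 0 := by
      funext i
      refine IsHausdorff.haus
        (IsAdicComplete.toIsHausdorff :
          IsHausdorff (IsLocalRing.maximalIdeal ℤ_[p]) ℤ_[p])
        (e.equivFun x i) fun n => ?_
      rw [smod_iff_dvd_zp, sub_zero]
      exact hco n i
    exact e.equivFun.map_eq_zero_iff.mp hz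
  have hP : IsPrecomplete (Ideal.span {((p : ℕ) : A)}) A := by
    constructor
    intro f hf
    have key : ∀ i, ∃ L : ℤ_[p], ∀ n, e.equivFun (f n) i ≡ L
        [SMOD ((IsLocalRing.maximalIdeal ℤ_[p]) ^ n • ⊤ : Submodule ℤ_[p] ℤ_[p])] := by
      intro i
      apply IsPrecomplete.prec
        (IsAdicComplete.toIsPrecomplete :
          IsPrecomplete (IsLocalRing.maximalIdeal ℤ_[p]) ℤ_[p])
      intro m n hmn
      rw [smod_iff_dvd_zp]
      have h1 := (smod_iff_dvd p A (f m) (f n) m).mp (hf hmn)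
      have h2 := (dvd_iff_coords p A e m _).mp h1 i
      rwa [map_sub, Pi.sub_apply] at h2
    choose L hL using key
    refine ⟨e.equivFun.symm L, fun n => ?_⟩
    rw [smod_iff_dvd, dvd_iff_coords p A e]
    intro i
    have := (smod_iff_dvd_zp p _ _ n).mp (hL i n)
    rw [map_sub, Pi.sub_apply, e.equivFun.apply_symm_apply]
    exact this
  exact { toIsHausdorff := hH, toIsPrecomplete := hP }

theorem finQuotA (e : Module.Basis ι ℤ_[p] A) : Finite (A ⧸ (Ideal.span {((p : ℕ) : A)})) := by
  haveI : NeZero p := ⟨(Fact.out : p.Prime).ne_zero⟩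
  set I := Ideal.span {((p : ℕ) : A)} with hI
  have hsur : Function.Surjective
      (fun z : ι → ZMod p =>
        Ideal.Quotient.mk I (e.equivFun.symm (fun i => (ZMod.cast (z i) : ℤ_[p])))) := by
    intro q
    obtain ⟨x, rfl⟩ := Ideal.Quotient.mk_surjective q
    refine ⟨fun i => PadicInt.toZMod (e.equivFun x i), ?_⟩
    rw [Ideal.Quotient.mk_eq_mk_iff_sub_mem, hI, Ideal.mem_span_singleton]
    have h1 : ((p : ℕ) : A) ^ 1 ∣
        e.equivFun.symm (fun i => (ZMod.cast (PadicInt.toZMod (e.equivFun x i)) : ℤ_[p])) - x := by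
      rw [dvd_iff_coords p A e]
      intro i
      rw [map_sub, Pi.sub_apply, e.equivFun.apply_symm_apply, pow_one]
      have h2 := PadicInt.toZMod_spec (e.equivFun x i)
      rw [PadicInt.maximalIdeal_eq_span_p, Ideal.mem_span_singleton] at h2
      have h3 := dvd_neg.mpr h2
      rwa [neg_sub] at h3
    rwa [pow_one] at h1
  exact Finite.of_surjective _ hsur

theorem localA [IsDomain A]
    (hadic : IsAdicComplete (Ideal.span {((p : ℕ) : A)}) A)
    (hfin : Finite (A ⧸ (Ideal.span {((p : ℕ) : A)}))) : IsLocalRing A := by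
  set I := Ideal.span {((p : ℕ) : A)} with hIdef
  haveI : HenselianRing A I := inferInstance
  have hjac : I ≤ Ideal.jacobson ⊥ := HenselianRing.jac
  apply IsLocalRing.of_isUnit_or_isUnit_one_sub_self
  intro a
  obtain ⟨n, hn, hpow⟩ := exists_pow_sq_eq (Ideal.Quotient.mk I a)
  rw [← map_pow, ← map_pow] at hpow
  have hfm : (X ^ 2 - X : A[X]).Monic := by
    apply monic_X_pow_sub
    simpa using degree_X_le (R := A)
  have heval : (X ^ 2 - X : A[X]).eval (a ^ n) ∈ I := by
    rw [← Ideal.Quotient.eq_zero_iff_mem]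
    rw [eval_sub, eval_pow, eval_X, map_sub, ← pow_mul, mul_comm n 2]
    rw [hpow, sub_self]
  have hder : IsUnit (Ideal.Quotient.mk I ((X ^ 2 - X : A[X]).derivative.eval (a ^ n))) := by
    have hd : (X ^ 2 - X : A[X]).derivative.eval (a ^ n) = 2 * a ^ n - 1 := by
      simp [derivative_sub, derivative_X_pow, one_add_one_eq_two]
    rw [hd]
    apply IsUnit.of_mul_eq_one (Ideal.Quotient.mk I (2 * a ^ n - 1))
    rw [← map_mul, ← map_one (Ideal.Quotient.mk I)]
    have h2 : (Ideal.Quotient.mk I (a ^ n)) * (Ideal.Quotient.mk I (a ^ n))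
        = Ideal.Quotient.mk I (a ^ n) := by
      rw [← map_mul, ← pow_add, ← two_mul]
      exact hpow
    rw [show ((2 * a ^ n - 1) * (2 * a ^ n - 1) : A)
        = 4 * ((a ^ n) * (a ^ n)) - 4 * (a ^ n) + 1 by ring]
    rw [map_add, map_sub, map_mul, map_mul, map_mul, h2]
    ring
  obtain ⟨E, hroot, hEmem⟩ := HenselianRing.is_henselian (X ^ 2 - X : A[X]) hfm (a ^ n) heval hder
  have hE2 : E * (E - 1) = 0 := by
    have h3 : (X ^ 2 - X : A[X]).eval E = 0 := hroot
    rw [eval_sub, eval_pow, eval_X] at h3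
    linear_combination h3
  rcases mul_eq_zero.mp hE2 with hE0 | hE1
  · right
    have ha : a ^ n ∈ Ideal.jacobson ⊥ := by
      apply hjac
      have := I.neg_mem hEmem
      rw [hE0, zero_sub, neg_neg] at this
      exact this
    have h1 : IsUnit (1 - a ^ n) := by
      have h4 := Ideal.mem_jacobson_bot.mp ha (-1)
      rwa [show (a ^ n * -1 + 1 : A) = 1 - a ^ n by ring] at h4
    refine isUnit_of_dvd_unit ⟨∑ i ∈ Finset.range n, a ^ i, ?_⟩ h1
    linear_combination geom_sum_mul a n
  · left
    have hE1' : E = 1 := by linear_combination hE1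
    have ha : 1 - a ^ n ∈ Ideal.jacobson ⊥ := by
      apply hjac
      rw [hE1'] at hEmem
      exact hEmem
    have h1 : IsUnit (a ^ n) := by
      have h4 := Ideal.mem_jacobson_bot.mp ha (-1)
      rwa [show ((1 - a ^ n) * -1 + 1 : A) = a ^ n by ring] at h4
    exact isUnit_of_dvd_unit (dvd_pow_self a hn.ne') h1

end PAux

section Field

variable (p : ℕ) [Fact p.Prime]
variable (K : Type*) [Field K] [Algebra ℚ_[p] K]
  [Algebra ℤ_[p] K] [IsScalarTower ℤ_[p] ℚ_[p] K]

/-- `p` is not a unit in the integral closure of `ℤ_p` in any `ℚ_p`-algebra field. -/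
theorem p_nonunit : ¬ IsUnit ((p : ℕ) : integralClosure ℤ_[p] K) := by
  intro h
  obtain ⟨u, hu⟩ := h
  have h1 : ((p : ℕ) : integralClosure ℤ_[p] K) *
      ((u⁻¹ : (integralClosure ℤ_[p] K)ˣ) : integralClosure ℤ_[p] K) = 1 := by
    rw [← hu]; exact u.mul_inv
  set w : K := (((u⁻¹ : (integralClosure ℤ_[p] K)ˣ) : integralClosure ℤ_[p] K) : K) with hwdef
  have hw : ((p : ℕ) : K) * w = 1 := by
    have := congrArg (fun z : integralClosure ℤ_[p] K => (z : K)) h1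
    push_cast at this
    exact this
  have hint : IsIntegral ℤ_[p] w :=
    ((u⁻¹ : (integralClosure ℤ_[p] K)ˣ) : integralClosure ℤ_[p] K).2
  have hp0 : ((p : ℕ) : ℚ_[p]) ≠ 0 := by
    exact_mod_cast (Fact.out : p.Prime).ne_zero
  have hwq : w = algebraMap ℚ_[p] K (((p : ℕ) : ℚ_[p])⁻¹) := by
    rw [map_inv₀, map_natCast]
    exact (inv_eq_of_mul_eq_one_right hw).symm
  rw [hwq, isIntegral_algebraMap_iff (algebraMap ℚ_[p] K).injective] at hint
  obtain ⟨y, hy⟩ := IsIntegrallyClosed.isIntegral_iff.1 hint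
  have hn1 : ‖algebraMap ℤ_[p] ℚ_[p] y‖ ≤ 1 := PadicInt.norm_le_one y
  rw [hy] at hn1
  have hnp : ‖(((p : ℕ) : ℚ_[p]))⁻¹‖ = (p : ℝ) := by
    rw [norm_inv, Padic.norm_p, inv_inv]
  rw [hnp] at hn1
  have : (2 : ℝ) ≤ (p : ℝ) := by exact_mod_cast (Fact.out : p.Prime).two_le
  linarith

variable [FiniteDimensional ℚ_[p] K]

theorem nzsd : Module.IsTorsionFree ℤ_[p] K :=
  Module.isTorsionFree_iff_algebraMap_injective.mpr <| by
    rw [IsScalarTower.algebraMap_eq ℤ_[p] ℚ_[p] K]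
    exact (algebraMap ℚ_[p] K).injective.comp (IsFractionRing.injective ℤ_[p] ℚ_[p])

theorem modfree : Module.Free ℤ_[p] (integralClosure ℤ_[p] K) :=
  have := nzsd p K
  IsIntegralClosure.module_free ℤ_[p] ℚ_[p] K (integralClosure ℤ_[p] K)

theorem dedekind : IsDedekindDomain (integralClosure ℤ_[p] K) :=
  IsIntegralClosure.isDedekindDomain ℤ_[p] ℚ_[p] K (integralClosure ℤ_[p] K)

theorem localO : IsLocalRing (integralClosure ℤ_[p] K) := by
  haveI := modfree p K
  haveI : Module.Finite ℤ_[p] (integralClosure ℤ_[p] K) :=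
    have := IsIntegralClosure.isNoetherian ℤ_[p] ℚ_[p] K (integralClosure ℤ_[p] K)
    Module.IsNoetherian.finite _ _
  let e := Module.Free.chooseBasis ℤ_[p] (integralClosure ℤ_[p] K)
  exact localA p _ (adicA p _ e) (finQuotA p _ e)

theorem hp0 : ((p : ℕ) : integralClosure ℤ_[p] K) ≠ 0 := by
  haveI : CharZero K := charZero_of_injective_algebraMap (algebraMap ℚ_[p] K).injective
  intro h
  have h2 : ((p : ℕ) : K) = 0 := by exact_mod_cast congrArg Subtype.val h
  exact Nat.cast_ne_zero.mpr (Fact.out : p.Prime).ne_zero h2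

theorem dvrO : IsDiscreteValuationRing (integralClosure ℤ_[p] K) := by
  haveI := dedekind p K
  haveI := localO p K
  have hfin : {I : Ideal (integralClosure ℤ_[p] K) | I.IsPrime}.Finite := by
    apply Set.Finite.subset
      ((Set.finite_singleton (IsLocalRing.maximalIdeal (integralClosure ℤ_[p] K))).insert ⊥)
    intro P hP
    by_cases h : P = ⊥
    · exact Set.mem_insert_iff.mpr (Or.inl h)
    · exact Set.mem_insert_iff.mpr (Or.inr (IsLocalRing.eq_maximalIdeal (hP.isMaximal h)))
  haveI : IsPrincipalIdealRing (integralClosure ℤ_[p] K) :=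
    IsPrincipalIdealRing.of_finite_primes hfin
  refine ⟨?_⟩
  intro hbot
  have hmem : ((p : ℕ) : integralClosure ℤ_[p] K) ∈
      IsLocalRing.maximalIdeal (integralClosure ℤ_[p] K) :=
    (IsLocalRing.mem_maximalIdeal _).mpr (mem_nonunits_iff.mpr (p_nonunit p K))
  rw [hbot, Ideal.mem_bot] at hmem
  exact hp0 p K hmem

theorem unit_of_not_dvd (π a : integralClosure ℤ_[p] K) (hπ : Irreducible π) (h : ¬ π ∣ a) :
    IsUnit a := by
  haveI := dvrO p K
  by_contra hu
  exact h ((Ideal.mem_span_singleton).mp (by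
    rw [← hπ.maximalIdeal_eq]
    exact hu))

theorem exists_pow_p (π : integralClosure ℤ_[p] K) (hπ : Irreducible π) :
    ∃ e : ℕ, 1 ≤ e ∧ ∃ u : (integralClosure ℤ_[p] K)ˣ,
      ((p : ℕ) : integralClosure ℤ_[p] K) = u * π ^ e := by
  haveI := dvrO p K
  obtain ⟨e, u, hu⟩ := IsDiscreteValuationRing.eq_unit_mul_pow_irreducible (hp0 p K) hπ
  refine ⟨e, ?_, u, hu⟩
  by_contra h
  have he : e = 0 := by omega
  rw [he, pow_zero, mul_one] at hu
  exact p_nonunit p K (hu ▸ u.isUnit)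

end Field

end Stmt3Aux

open Stmt3Aux in

/-- for `𝒪` the ring of integers of a finite extension `K/ℚ_p`, `π` a
uniformizer of `𝒪` and `f ∈ 𝒪[[T]]` not divisible by `π`, the set of `p`-power roots of
unity `ζ` with `ord_p(f(ζ−1)) ≥ ord_p(π)` is finite.  Roots of unity and values are taken
in the integral closure `R` of `ℤ_p` in an algebraic closure of `K` (which contains the ring
of integers of every `Frac(𝒪)(ζ)`); since `R` is the valuation ring of the algebraic closure,
the inequality `ord_p(f(ζ−1)) ≥ ord_p(π)` is expressed as divisibility `π ∣ f(ζ−1)` in `R`. -/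
theorem stmt_3 [FiniteDimensional ℚ_[p] K]
    (π : integralClosure ℤ_[p] K) (hπ : Irreducible π)
    (f : PowerSeries (integralClosure ℤ_[p] K))
    (hf : ¬ (PowerSeries.C π ∣ f)) :
    {ζ : integralClosure ℤ_[p] (AlgebraicClosure K) |
      (∃ k : ℕ, ζ ^ p ^ k = 1) ∧
      ∃ y : integralClosure ℤ_[p] (AlgebraicClosure K),
        EvalsTo (toClosure p K) f (ζ - 1) y ∧ toClosure p K π ∣ y}.Finite := by
  classical
  have hp : p.Prime := Fact.out
  set R := integralClosure ℤ_[p] (AlgebraicClosure K) with hRdef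
  set φ := toClosure p K with hφdef
  have hφinj : Function.Injective φ := by
    intro a b hab
    have h1 : algebraMap K (AlgebraicClosure K) a.1 = algebraMap K (AlgebraicClosure K) b.1 :=
      congrArg Subtype.val hab
    exact Subtype.ext ((algebraMap K (AlgebraicClosure K)).injective h1)
  have hex : ∃ n, ¬ π ∣ PowerSeries.coeff n f := by
    by_contra h
    push_neg at h
    apply hf
    choose g hg using h
    refine ⟨PowerSeries.mk g, PowerSeries.ext fun n => ?_⟩
    rw [PowerSeries.coeff_C_mul, PowerSeries.coeff_mk]
    exact hg n
  set m := Nat.find hex with hmdef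
  have hmspec : ¬ π ∣ PowerSeries.coeff m f := Nat.find_spec hex
  have hmmin : ∀ n, n < m → π ∣ PowerSeries.coeff n f :=
    fun n hn => not_not.mp (Nat.find_min hex hn)
  obtain ⟨e, he1, u, hu⟩ := exists_pow_p p K π hπ
  have hAm : IsUnit (φ (PowerSeries.coeff m f)) :=
    (unit_of_not_dvd p K π _ hπ hmspec).map φ
  have hπ0 : φ π ≠ 0 := fun h => hπ.ne_zero (hφinj (h.trans (map_zero φ).symm))
  have hpR : ¬ IsUnit ((p : ℕ) : R) := p_nonunit p (AlgebraicClosure K)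
  have E4' : ((p : ℕ) : R) = φ u * φ π ^ e := by
    rw [← map_natCast φ p, hu, map_mul, map_pow]
  set c0 := e * m + 1 with hc0
  have hc0pos : 0 < p ^ c0 := pow_pos hp.pos _
  have hmonic : (X ^ (p ^ c0) - 1 : Polynomial R).Monic := by
    have h1 := monic_X_pow_sub_C (1 : R) hc0pos.ne'
    rwa [map_one] at h1
  apply Set.Finite.subset (Polynomial.finite_setOf_isRoot hmonic.ne_zero)
  intro ζ hζ
  obtain ⟨⟨k, hk⟩, y, hy, hdvd⟩ := hζ
  have hex2 : ∃ j, ζ ^ p ^ j = 1 := ⟨k, hk⟩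
  set k0 := Nat.find hex2 with hk0def
  have hk0 : ζ ^ p ^ k0 = 1 := Nat.find_spec hex2
  show (X ^ (p ^ c0) - 1 : Polynomial R).IsRoot ζ
  have hroot : ∀ j : ℕ, ζ ^ p ^ j = 1 → j ≤ c0 → (X ^ (p ^ c0) - 1 : Polynomial R).IsRoot ζ := by
    intro j hj hjle
    rw [IsRoot, eval_sub, eval_pow, eval_X, eval_one, sub_eq_zero]
    have h1 : p ^ c0 = p ^ j * p ^ (c0 - j) := by rw [← pow_add]; congr 1; omega
    rw [h1, pow_mul, hj, one_pow]
  by_cases hk0le : k0 ≤ c0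
  · exact hroot k0 hk0 hk0le
  exfalso
  push_neg at hk0le
  have hk01 : 1 ≤ k0 := by omega
  -- ζ is a primitive p^k0-th root of unity
  have hord : IsPrimitiveRoot ζ (p ^ k0) := by
    have hfin : orderOf ζ ∣ p ^ k0 := orderOf_dvd_of_pow_eq_one hk0
    obtain ⟨j, hj, hordj⟩ := (Nat.dvd_prime_pow hp).mp hfin
    have hjk : j = k0 := by
      by_contra hne
      have hjlt : j < k0 := lt_of_le_of_ne hj hne
      have h2 : ζ ^ p ^ (k0 - 1) = 1 := by
        apply orderOf_dvd_iff_pow_eq_one.mp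
        rw [hordj]
        exact pow_dvd_pow p (by omega)
      exact Nat.find_min hex2 (by omega : k0 - 1 < k0) h2
    have h3 := IsPrimitiveRoot.orderOf ζ
    rwa [hordj, hjk] at h3
  obtain ⟨U, hUu, hUeq⟩ := p_eq_sub_one_pow_mul_unit p hk01 hord
  set c := (p ^ k0).totient with hcdef
  have hcge : e * m + 2 ≤ c := by
    rw [hcdef, Nat.totient_prime_pow hp hk01]
    have h1 : k0 - 1 < 2 ^ (k0 - 1) := Nat.lt_two_pow_self
    have h2 : 2 ^ (k0 - 1) ≤ p ^ (k0 - 1) := Nat.pow_le_pow_left hp.two_le _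
    have h3 : p ^ (k0 - 1) ≤ p ^ (k0 - 1) * (p - 1) :=
      Nat.le_mul_of_pos_right _ (by have := hp.two_le; omega)
    have h4 : e * m + 2 ≤ k0 := by omega
    have h5 : k0 ≤ p ^ (k0 - 1) := by omega
    omega
  -- extract the evaluation relation
  have hEv := hy (m + 1)
  rw [Finset.sum_range_succ] at hEv
  obtain ⟨d, hd⟩ := hEv
  obtain ⟨σ, hσ⟩ := hdvd
  have hsum : φ π ∣ ∑ n ∈ Finset.range m, φ (PowerSeries.coeff n f) * (ζ - 1) ^ n := by
    apply Finset.dvd_sum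
    intro n hn
    obtain ⟨b, hb⟩ := hmmin n (Finset.mem_range.mp hn)
    exact Dvd.dvd.mul_right ⟨φ b, by rw [hb, map_mul]⟩ _
  obtain ⟨τ, hτ⟩ := hsum
  have hkey : φ (PowerSeries.coeff m f) * (ζ - 1) ^ m
      = φ π * (σ - τ) - (ζ - 1) ^ (m + 1) * d := by
    linear_combination -hd + hσ - hτ
  obtain ⟨w1, hw1⟩ := isUnit_iff_exists_inv.mp hAm
  set D := w1 * d with hD
  set s := w1 * (σ - τ) with hs
  set w : R := 1 + (ζ - 1) * D with hw
  have E1 : (ζ - 1) ^ m * w = φ π * s := by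
    rw [hw, hD, hs]
    linear_combination w1 * hkey - (ζ - 1) ^ m * hw1
  have E2 : ((ζ - 1) ^ c) ^ m * w ^ c = (φ π) ^ c * s ^ c := by
    calc ((ζ - 1) ^ c) ^ m * w ^ c = ((ζ - 1) ^ m * w) ^ c := by
          rw [mul_pow, ← pow_mul, ← pow_mul, mul_comm c m]
    _ = (φ π * s) ^ c := by rw [E1]
    _ = (φ π) ^ c * s ^ c := mul_pow _ _ _
  have E3 : ((p : ℕ) : R) ^ m * w ^ c = (φ π) ^ c * (s ^ c * U ^ m) := by
    calc ((p : ℕ) : R) ^ m * w ^ c = ((ζ - 1) ^ c * U) ^ m * w ^ c := by rw [← hUeq]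
    _ = ((ζ - 1) ^ c) ^ m * w ^ c * U ^ m := by ring
    _ = (φ π) ^ c * s ^ c * U ^ m := by rw [E2]
    _ = _ := by ring
  have E4 : ((p : ℕ) : R) ^ m = (φ u) ^ m * (φ π) ^ (e * m) := by
    rw [E4', mul_pow, ← pow_mul]
  have hcem : e * m + (c - e * m) = c := by omega
  have E5 : (φ u) ^ m * w ^ c = (φ π) ^ (c - e * m) * (s ^ c * U ^ m) := by
    apply mul_left_cancel₀ (pow_ne_zero (e * m) hπ0)
    calc (φ π) ^ (e * m) * ((φ u) ^ m * w ^ c)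
        = ((p : ℕ) : R) ^ m * w ^ c := by rw [E4]; ring
    _ = (φ π) ^ c * (s ^ c * U ^ m) := E3
    _ = (φ π) ^ (e * m) * ((φ π) ^ (c - e * m) * (s ^ c * U ^ m)) := by
          rw [show (φ π) ^ c = (φ π) ^ (e * m) * (φ π) ^ (c - e * m) by
            rw [← pow_add, hcem], mul_assoc]

  have hwc : φ π ∣ w ^ c := by
    have h1 : φ π ∣ (φ u) ^ m * w ^ c := by
      rw [E5]
      exact Dvd.dvd.mul_right (dvd_pow_self (φ π) (by omega : c - e * m ≠ 0)) _
    obtain ⟨w2, hw2⟩ := isUnit_iff_exists_inv.mp ((u.isUnit.map φ).pow m)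
    obtain ⟨r, hr⟩ := h1
    exact ⟨w2 * r, by linear_combination w2 * hr - w ^ c * hw2⟩
  have h72 : (ζ - 1) ∣ w ^ c - 1 := by
    have h71 : (ζ - 1) ∣ w - 1 := ⟨D, by rw [hw]; ring⟩
    have h73 := sub_dvd_pow_sub_pow w 1 c
    rw [one_pow] at h73
    exact h71.trans h73
  have hspan : Ideal.span {((p : ℕ) : R)} ≠ ⊤ := by
    rw [Ne, Ideal.span_singleton_eq_top]
    exact hpR
  obtain ⟨M, hMmax, hMle⟩ := Ideal.exists_le_maximal _ hspan
  have hpM : ((p : ℕ) : R) ∈ M := hMle (Ideal.mem_span_singleton_self _)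
  have hMprime := hMmax.isPrime
  have hπM : φ π ∈ M := by
    have h1 : (φ u) * (φ π) ^ e ∈ M := by rw [← E4']; exact hpM
    rcases hMprime.mem_or_mem h1 with h | h
    · exact absurd (M.eq_top_of_isUnit_mem h (u.isUnit.map φ)) hMmax.ne_top
    · exact hMprime.mem_of_pow_mem _ h
  have hζM : (ζ - 1) ∈ M := by
    have h1 : (ζ - 1) ^ c * U ∈ M := by rw [← hUeq]; exact hpM
    rcases hMprime.mem_or_mem h1 with h | h
    · exact hMprime.mem_of_pow_mem _ h
    · exact absurd (M.eq_top_of_isUnit_mem h hUu) hMmax.ne_top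
  have h1M : (1 : R) ∈ M := by
    obtain ⟨r1, hr1⟩ := hwc
    obtain ⟨r2, hr2⟩ := h72
    have h9 : (1 : integralClosure ℤ_[p] (AlgebraicClosure K)) = φ π * r1 - (ζ - 1) * r2 := by
      rw [← hr1, ← hr2]; ring
    rw [h9]
    exact M.sub_mem (M.mul_mem_right _ hπM) (M.mul_mem_right _ hζM)
  exact hMmax.ne_top ((Ideal.eq_top_iff_one M).mpr h1M)
end

section
/- Let p be a prime and let a ∈ ℤ_p[[T]] be a nonzero formal power series. Then a(ζ−1) ≠ 0 for all but finitely many p-power roots of unity ζ, where a(ζ−1) is the value of a at ζ−1 in ℤ_p[ζ]. -/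
open Finset Polynomial


private lemma assoc_prod {R : Type*} [CommMonoid R] {ι : Type*} (s : Finset ι)
    (f : ι → R) (c : R) (h : ∀ i ∈ s, Associated (f i) c) :
    Associated (∏ i ∈ s, f i) (c ^ s.card) := by
  classical
  induction s using Finset.induction_on with
  | empty => simp
  | insert _ _ hi ih =>
    rename_i a s
    rw [Finset.prod_insert hi, Finset.card_insert_of_notMem hi, pow_succ, mul_comm (c ^ s.card)]
    exact (h a (Finset.mem_insert_self a s)).mul_mul
      (ih fun i his => h i (Finset.mem_insert_of_mem his))

private lemma assoc_p {R : Type*} [CommRing R] [IsDomain R] {p : ℕ} [Fact p.Prime]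
    {k : ℕ} {ζ : R} (hζ : IsPrimitiveRoot ζ (p ^ (k + 1))) :
    Associated ((ζ - 1) ^ (p ^ (k + 1)).totient) ((p : R)) := by
  have h0 : 0 < p ^ (k + 1) := pow_pos (Fact.out : p.Prime).pos _
  have : NeZero (p ^ (k + 1)) := ⟨h0.ne'⟩
  have hp : (p : R) = ∏ μ ∈ primitiveRoots (p ^ (k + 1)) R, (1 - μ) := by
    conv_lhs => rw [← eval_one_cyclotomic_prime_pow (R := R) k (p := p)]
    rw [cyclotomic_eq_prod_X_sub_primitiveRoots hζ]
    simp [eval_prod]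
  have key : ∀ μ ∈ primitiveRoots (p ^ (k + 1)) R, Associated (1 - μ) (ζ - 1) := by
    intro μ hμ
    have hμ' : IsPrimitiveRoot μ (p ^ (k + 1)) := (mem_primitiveRoots h0).1 hμ
    have d1 : (ζ - 1) ∣ (μ - 1) := by
      obtain ⟨i, _, rfl⟩ := hζ.eq_pow_of_pow_eq_one hμ'.pow_eq_one
      simpa using sub_dvd_pow_sub_pow ζ 1 i
    have d2 : (μ - 1) ∣ (ζ - 1) := by
      obtain ⟨i, _, rfl⟩ := hμ'.eq_pow_of_pow_eq_one hζ.pow_eq_one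
      simpa using sub_dvd_pow_sub_pow μ 1 i
    have h1 : Associated (μ - 1) (ζ - 1) := associated_of_dvd_dvd d2 d1
    have : (1 - μ) = -(μ - 1) := by ring
    rw [this]
    exact (Associated.refl _).neg_left.trans h1
  have := assoc_prod _ _ _ key
  rw [hζ.card_primitiveRoots] at this
  exact (hp ▸ this).symm



variable (p : ℕ) [Fact p.Prime]

set_option maxHeartbeats 1000000 in
set_option synthInstance.maxHeartbeats 200000 in
/-- a nonzero `a ∈ ℤ_p[[T]]` satisfies `a(ζ−1) ≠ 0` for all but finitely many
`p`-power roots of unity `ζ`.  The roots of unity are taken in the integral closure of `ℤ_p`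
in an algebraic closure of `ℚ_p` (which contains `ℤ_p[ζ]` for every such `ζ`), and
`a(ζ−1) = 0` is expressed by `EvalsTo … a (ζ-1) 0`. -/
theorem stmt_5 (a : PowerSeries ℤ_[p]) (ha : a ≠ 0) :
    {ζ : integralClosure ℤ_[p] (AlgebraicClosure ℚ_[p]) |
      (∃ k : ℕ, ζ ^ p ^ k = 1) ∧
      EvalsTo (algebraMap ℤ_[p] (integralClosure ℤ_[p] (AlgebraicClosure ℚ_[p])))
        a (ζ - 1) 0}.Finite := by
  classical
  by_contra hinf
  set AC := AlgebraicClosure ℚ_[p] with hAC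
  set R := integralClosure ℤ_[p] AC with hRdef
  set φ : ℤ_[p] →+* R := algebraMap ℤ_[p] R with hφdef
  have hp : p.Prime := Fact.out
  -- p is not a unit in R
  have hpu : ¬ IsUnit ((p : R)) := by
    intro h
    obtain ⟨u, hu⟩ := h
    set v : R := ((u⁻¹ : Rˣ) : R) with hvdef
    have hv : (p : R) * v = 1 := by rw [← hu]; exact u.mul_inv
    have hv' : (p : AC) * ((v : AC)) = 1 := by
      have := congrArg (fun x : R => (x : AC)) hv
      push_cast at this
      exact this
    have hpAC : (p : AC) ≠ 0 := by
      exact_mod_cast Nat.cast_ne_zero.2 hp.pos.ne'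
    have hvq : (v : AC) = algebraMap ℚ_[p] AC ((p : ℚ_[p])⁻¹) := by
      rw [map_inv₀, map_natCast]
      exact eq_inv_of_mul_eq_one_right hv'
    have hint : IsIntegral ℤ_[p] (v : AC) := v.2
    rw [hvq, isIntegral_algebraMap_iff (algebraMap ℚ_[p] AC).injective] at hint
    obtain ⟨x, hx⟩ := IsIntegrallyClosed.isIntegral_iff.1 hint
    have hpx : (p : ℤ_[p]) * x = 1 := by
      apply IsFractionRing.injective ℤ_[p] ℚ_[p]
      rw [map_mul, map_one, hx, map_natCast]
      field_simp
      exact div_self (Nat.cast_ne_zero.2 hp.pos.ne')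
    exact PadicInt.prime_p.not_isUnit (IsUnit.of_mul_eq_one _ hpx)
  -- extract p-power from a
  obtain ⟨n0, hn0⟩ : ∃ n, PowerSeries.coeff n a ≠ 0 := by
    by_contra h; push_neg at h; exact ha (PowerSeries.ext fun n => by rw [h n, map_zero])
  have hbound : ∃ ν : ℕ, ¬ ∀ n, (p : ℤ_[p]) ^ ν ∣ PowerSeries.coeff n a := by
    have h0 : (0 : ℝ) < ‖PowerSeries.coeff n0 a‖ := norm_pos_iff.2 hn0
    have hplt : ((p : ℝ))⁻¹ < 1 := by
      rw [inv_lt_one_iff₀]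
      right
      exact_mod_cast hp.one_lt
    obtain ⟨ν, hν⟩ := exists_pow_lt_of_lt_one h0 hplt
    refine ⟨ν, fun h => ?_⟩
    have hle : ‖PowerSeries.coeff n0 a‖ ≤ (p : ℝ) ^ (-(ν : ℤ)) := by
      rw [PadicInt.norm_le_pow_iff_mem_span_pow, Ideal.mem_span_singleton]
      exact h n0
    rw [zpow_neg, zpow_natCast, ← inv_pow] at hle
    exact absurd (lt_of_le_of_lt hle hν) (lt_irrefl _)
  have hμ1pos : Nat.find hbound ≠ 0 := by
    intro h
    apply Nat.find_spec hbound
    rw [h]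
    simp
  obtain ⟨μ, hμeq⟩ : ∃ μ, Nat.find hbound = μ + 1 :=
    ⟨Nat.find hbound - 1, (Nat.succ_pred_eq_of_ne_zero hμ1pos).symm⟩
  have hPμ : ∀ n, (p : ℤ_[p]) ^ μ ∣ PowerSeries.coeff n a :=
    not_not.1 (Nat.find_min hbound (by omega))
  set b : ℕ → ℤ_[p] := fun n => (hPμ n).choose with hbdef
  have hb : ∀ n, PowerSeries.coeff n a = (p : ℤ_[p]) ^ μ * b n :=
    fun n => (hPμ n).choose_spec
  have hm_ex : ∃ n, ¬ (p : ℤ_[p]) ∣ b n := by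
    by_contra h
    push_neg at h
    apply Nat.find_spec hbound
    rw [hμeq]
    intro n
    obtain ⟨c, hc⟩ := h n
    exact ⟨c, by rw [hb n, hc]; ring⟩
  set m := Nat.find hm_ex with hmdef
  have hbm : ¬ (p : ℤ_[p]) ∣ b m := Nat.find_spec hm_ex
  have hlow : ∀ n < m, (p : ℤ_[p]) ∣ b n := fun n hn => not_not.1 (Nat.find_min hm_ex (by rwa [← hmdef]))
  have hbmu : IsUnit (b m) := by
    rw [PadicInt.isUnit_iff]
    refine le_antisymm (PadicInt.norm_le_one _) (not_lt.1 fun hlt => hbm ?_)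
    exact (PadicInt.norm_lt_one_iff_dvd _).1 hlt
  -- pick a root of unity of large order in the bad set
  have hFfin : {ζ : R | ζ ^ p ^ (m + 1) = 1}.Finite := by
    have hsub : {ζ : R | ζ ^ p ^ (m + 1) = 1} ⊆
        {x : R | (X ^ (p ^ (m + 1)) - C 1 : Polynomial R).IsRoot x} := by
      intro x hx
      simp only [Set.mem_setOf_eq] at hx ⊢
      simp [Polynomial.IsRoot, hx]
    exact (Polynomial.finite_setOf_isRoot
      (X_pow_sub_C_ne_zero (pow_pos hp.pos _) (1 : R))).subset hsub
  obtain ⟨ζ, hζS, hζK⟩ : ∃ ζ, (((∃ k : ℕ, ζ ^ p ^ k = 1) ∧ EvalsTo φ a (ζ - 1) 0)) ∧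
      ¬ ζ ^ p ^ (m + 1) = 1 := by
    obtain ⟨ζ, hζ⟩ := (Set.Infinite.diff hinf hFfin).nonempty
    exact ⟨ζ, hζ.1, hζ.2⟩
  obtain ⟨hζroot, heval⟩ := hζS
  set k0 := Nat.find hζroot with hk0def
  have hk0 : ζ ^ p ^ k0 = 1 := Nat.find_spec hζroot
  have hk0K : m + 1 < k0 := by
    by_contra h
    push_neg at h
    apply hζK
    have hsplit : p ^ (m + 1) = p ^ k0 * p ^ (m + 1 - k0) := by
      rw [← pow_add]; congr 1; omega
    rw [hsplit, pow_mul, hk0, one_pow]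
  have hprim : IsPrimitiveRoot ζ (p ^ k0) := by
    have h1 : orderOf ζ ∣ p ^ k0 := orderOf_dvd_of_pow_eq_one hk0
    obtain ⟨j, hj, hord⟩ := (Nat.dvd_prime_pow hp).1 h1
    have hjk : j = k0 := by
      by_contra hne
      have hjlt : j < k0 := lt_of_le_of_ne hj hne
      exact Nat.find_min hζroot (by rwa [← hk0def]) (by rw [← hord]; exact pow_orderOf_eq_one ζ)
    have := IsPrimitiveRoot.orderOf ζ
    rwa [hord, hjk] at this
  obtain ⟨c, hc⟩ : ∃ c, k0 = c + 1 := ⟨k0 - 1, by omega⟩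
  set e := (p ^ k0).totient with hedef
  have hassoc : Associated ((ζ - 1) ^ e) ((p : R)) := by
    rw [hedef, hc]
    exact assoc_p (hc ▸ hprim)
  have he : m + 1 ≤ e := by
    have h1 : e = p ^ (k0 - 1) * (p - 1) := by
      rw [hedef, Nat.totient_prime_pow hp (by omega)]
    have h2 : p ^ (k0 - 1) ≤ e := by
      rw [h1]
      exact Nat.le_mul_of_pos_right _ (by have := hp.two_le; omega)
    have h3 : m + 1 < 2 ^ (m + 1) := Nat.lt_two_pow_self
    have h4 : (2:ℕ) ^ (m + 1) ≤ 2 ^ (k0 - 1) := Nat.pow_le_pow_right (by omega) (by omega)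
    have h5 : (2:ℕ) ^ (k0 - 1) ≤ p ^ (k0 - 1) := Nat.pow_le_pow_left hp.two_le _
    exact le_trans (Nat.le_of_lt (Nat.lt_of_lt_of_le h3 (le_trans h4 h5))) h2
  have hζne1 : ζ ≠ 1 := by
    rintro rfl
    exact hζK (one_pow _)
  have hπ0 : ζ - 1 ≠ 0 := sub_ne_zero.2 hζne1
  obtain ⟨u, hu⟩ := id hassoc
  -- partial sums of b
  set Sb : ℕ → R := fun N => ∑ n ∈ Finset.range N, φ (b n) * (ζ - 1) ^ n with hSbdef
  have hdvd1 : ∀ N, (ζ - 1) ^ N ∣ (p : R) ^ μ * Sb N := by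
    intro N
    have h1 := heval N
    rw [zero_sub, dvd_neg] at h1
    have h2 : ∑ n ∈ Finset.range N, φ (PowerSeries.coeff n a) * (ζ - 1) ^ n
        = (p : R) ^ μ * Sb N := by
      rw [hSbdef, Finset.mul_sum]
      refine Finset.sum_congr rfl fun n _ => ?_
      rw [hb n, map_mul, map_pow, map_natCast]
      ring
    rwa [h2] at h1
  have hstep1 : ∀ M, (ζ - 1) ^ M ∣ Sb M := by
    intro M
    have h1 := hdvd1 (μ * e + M)
    rw [← hu] at h1
    have hrw : ((ζ - 1) ^ e * (u : R)) ^ μ * Sb (μ * e + M)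
        = (ζ - 1) ^ (μ * e) * ((u : R) ^ μ * Sb (μ * e + M)) := by
      rw [mul_pow, ← pow_mul, mul_comm e μ]
      ring
    rw [hrw, pow_add] at h1
    have h2 : (ζ - 1) ^ M ∣ (u : R) ^ μ * Sb (μ * e + M) :=
      (mul_dvd_mul_iff_left (pow_ne_zero _ hπ0)).1 h1
    have h3 : (ζ - 1) ^ M ∣ Sb (μ * e + M) :=
      ((Units.isUnit (u ^ μ)).dvd_mul_left).1 (by
        rw [Units.val_pow_eq_pow_val]; exact h2)
    have h4 : Sb M = Sb (μ * e + M)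
        - ∑ n ∈ Finset.Ico M (μ * e + M), φ (b n) * (ζ - 1) ^ n := by
      rw [hSbdef]
      simp only []
      rw [← Finset.sum_range_add_sum_Ico _ (Nat.le_add_left M (μ * e))]
      ring
    rw [h4]
    refine dvd_sub h3 (Finset.dvd_sum fun n hn => ?_)
    exact Dvd.dvd.mul_left (pow_dvd_pow _ (Finset.mem_Ico.1 hn).1) _
  -- final contradiction
  have h5 := hstep1 (m + 1)
  have hSm : (ζ - 1) ^ (m + 1) ∣ Sb m := by
    refine Finset.dvd_sum fun n hn => ?_
    obtain ⟨c', hc'⟩ := hlow n (Finset.mem_range.1 hn)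
    rw [hc', map_mul, map_natCast]
    have hdp : (ζ - 1) ^ (m + 1) ∣ (p : R) := dvd_trans (pow_dvd_pow _ he) hassoc.dvd
    exact (hdp.mul_right _).mul_right _
  have h6 : (ζ - 1) ^ (m + 1) ∣ φ (b m) * (ζ - 1) ^ m := by
    have hSbm : Sb (m + 1) = Sb m + φ (b m) * (ζ - 1) ^ m := Finset.sum_range_succ _ m
    rw [hSbm] at h5
    exact (dvd_add_right hSm).1 h5
  have h7 : (ζ - 1) ∣ φ (b m) := by
    have h8 : (ζ - 1) * (ζ - 1) ^ m ∣ φ (b m) * (ζ - 1) ^ m := by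
      rw [← pow_succ']
      exact h6
    exact (mul_dvd_mul_iff_right (pow_ne_zero m hπ0)).1 h8
  have h9 : IsUnit (ζ - 1) := isUnit_of_dvd_unit h7 (hbmu.map φ)
  exact hpu (hassoc.isUnit (h9.pow e))
end

section
/- Let p be a prime and let h ∈ ℤ_p[[t₀,t₁]] be a nonzero formal power series. Then the specialization h(t₀,ζ−1) is nonzero in ℤ_p[ζ][[t₀]] for all but finitely many p-power roots of unity ζ. -/
set_option maxHeartbeats 1000000
set_option synthInstance.maxHeartbeats 1000000


/-- `SpecAt φ x h H` says that `H ∈ S[[t₀]]` is the specialisation `h(t₀,x)` of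
`h ∈ (R[[t₁]])[[t₀]]`: each `t₀`-coefficient of `H` is the value at `x` of the corresponding
`t₀`-coefficient of `h` (a power series in `t₁`). -/
def SpecAt {R S : Type*} [CommRing R] [CommRing S] (φ : R →+* S) (x : S)
    (h : PowerSeries (PowerSeries R)) (H : PowerSeries S) : Prop :=
  ∀ k : ℕ, EvalsTo φ (PowerSeries.coeff k h) x (PowerSeries.coeff k H)

/-- `p` is not a unit in the integral closure of `ℤ_p` in an algebraic closure of `ℚ_p`. -/
lemma not_isUnit_p_s6 (p : ℕ) [Fact p.Prime] :
    ¬ IsUnit ((p : integralClosure ℤ_[p] (AlgebraicClosure ℚ_[p]))) := by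
  set F := AlgebraicClosure ℚ_[p]
  intro hu
  obtain ⟨x, hx⟩ := isUnit_iff_exists_inv.mp hu
  have hx' : ((p : ℕ) : F) * (x : F) = 1 := by exact_mod_cast congrArg Subtype.val hx
  have hp0 : ((p : ℚ_[p])) ≠ 0 := by
    exact_mod_cast Nat.cast_ne_zero.mpr (Fact.out (p := p.Prime)).ne_zero
  have hpF : ((p : ℕ) : F) ≠ 0 := by
    exact_mod_cast Nat.cast_ne_zero.mpr (Fact.out (p := p.Prime)).ne_zero
  have key : ((p : ℕ) : F) * algebraMap ℚ_[p] F ((p : ℚ_[p])⁻¹) = 1 := by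
    rw [← map_natCast (algebraMap ℚ_[p] F), ← map_mul, mul_inv_cancel₀ hp0, map_one]
  have hxval : (x : F) = algebraMap ℚ_[p] F ((p : ℚ_[p])⁻¹) :=
    mul_left_cancel₀ hpF (hx'.trans key.symm)
  have hint : IsIntegral ℤ_[p] (algebraMap ℚ_[p] F ((p : ℚ_[p])⁻¹)) := hxval ▸ x.2
  have hint2 : IsIntegral ℤ_[p] ((p : ℚ_[p])⁻¹) := by
    rwa [isIntegral_algebraMap_iff (algebraMap ℚ_[p] F).injective] at hint
  obtain ⟨z, hz⟩ := IsIntegrallyClosed.isIntegral_iff.mp hint2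
  have hnorm : ‖((p : ℚ_[p]))⁻¹‖ ≤ 1 := by rw [← hz]; exact z.2
  rw [norm_inv, Padic.norm_p, inv_inv] at hnorm
  have : (2 : ℝ) ≤ p := by exact_mod_cast (Fact.out (p := p.Prime)).two_le
  linarith

/-- If `ζ` is a primitive `p^(k+1)`-th root of unity in a domain, then `(ζ-1)^φ(p^(k+1))`
is associated to `p`. -/
lemma assoc_pow {R : Type*} [CommRing R] [IsDomain R] (p : ℕ) [Fact p.Prime] {ζ : R} {k : ℕ}
    (hζ : IsPrimitiveRoot ζ (p ^ (k + 1))) :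
    Associated ((ζ - 1) ^ (p ^ (k + 1)).totient) ((p : ℕ) : R) := by
  haveI : NeZero (p ^ (k + 1)) :=
    ⟨pow_ne_zero _ (Fact.out (p := p.Prime)).ne_zero⟩
  have hev : ((p : ℕ) : R) = ∏ μ ∈ primitiveRoots (p ^ (k + 1)) R, (1 - μ) := by
    rw [← Polynomial.eval_one_cyclotomic_prime_pow k,
      Polynomial.cyclotomic_eq_prod_X_sub_primitiveRoots hζ]
    simp [Polynomial.eval_prod]
  have hassoc : ∀ μ ∈ primitiveRoots (p ^ (k + 1)) R, Associated (ζ - 1) (1 - μ) := by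
    intro μ hμ
    rw [mem_primitiveRoots (NeZero.pos _)] at hμ
    have h1 : ζ - 1 ∣ μ - 1 := by
      obtain ⟨i, _, rfl⟩ := hζ.eq_pow_of_pow_eq_one hμ.pow_eq_one
      simpa using sub_dvd_pow_sub_pow ζ 1 i
    have h2 : μ - 1 ∣ ζ - 1 := by
      obtain ⟨i, _, rfl⟩ := hμ.eq_pow_of_pow_eq_one hζ.pow_eq_one
      simpa using sub_dvd_pow_sub_pow μ 1 i
    exact (associated_of_dvd_dvd h1 h2).trans ⟨-1, by push_cast; ring⟩
  have := Associated.prod (primitiveRoots (p ^ (k + 1)) R) (fun _ => ζ - 1) (fun μ => 1 - μ)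
    hassoc
  rw [Finset.prod_const, hζ.card_primitiveRoots] at this
  rw [hev]; exact this

/-- Key valuation-theoretic contradiction: if `f ∈ ℤ_p[[t]]` has a coefficient that is
`p^μ` times a unit in a minimal position `m`, and `π` satisfies `π^e ∼ p` with `e ≥ m+1`,
then `f(π) ≠ 0`. -/
lemma key_lemma {R : Type*} [CommRing R] [IsDomain R] {p : ℕ} [Fact p.Prime]
    (φ : ℤ_[p] →+* R) {π : R} (hπ : π ≠ 0) {e μ m : ℕ} (w : Rˣ)
    (hp : ((p : ℕ) : R) = π ^ e * w) (hem : m + 1 ≤ e) (hpu : ¬ IsUnit ((p : ℕ) : R))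
    {f : PowerSeries ℤ_[p]} (u : ℤ_[p]ˣ)
    (ham : PowerSeries.coeff m f = (p : ℤ_[p]) ^ μ * u)
    (hall : ∀ n, (p : ℤ_[p]) ^ μ ∣ PowerSeries.coeff n f)
    (hlow : ∀ n < m, (p : ℤ_[p]) ^ (μ + 1) ∣ PowerSeries.coeff n f)
    (hE : EvalsTo φ f π 0) : False := by
  set N := e * μ + m + 1 with hN
  have hmN : m ∈ Finset.range N := Finset.mem_range.mpr (by omega)
  have hS : π ^ N ∣ ∑ n ∈ Finset.range N, φ (PowerSeries.coeff n f) * π ^ n := by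
    have := hE N
    rwa [zero_sub, dvd_neg] at this
  have hterm : ∀ n ∈ (Finset.range N).erase m,
      π ^ N ∣ φ (PowerSeries.coeff n f) * π ^ n := by
    intro n hn
    obtain ⟨hnm, hnN⟩ := Finset.mem_erase.mp hn
    rcases lt_or_gt_of_ne hnm with hlt | hgt
    · obtain ⟨c, hc⟩ := hlow n hlt
      rw [hc, map_mul, map_pow, map_natCast, hp]
      have harith : (π ^ e * (w : R)) ^ (μ + 1) * φ c * π ^ n =
          π ^ (e * (μ + 1) + n) * ((w : R) ^ (μ + 1) * φ c) := by ring
      rw [harith]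
      exact Dvd.dvd.mul_right (pow_dvd_pow π (by rw [Nat.mul_succ]; omega)) _
    · obtain ⟨c, hc⟩ := hall n
      rw [hc, map_mul, map_pow, map_natCast, hp]
      have harith : (π ^ e * (w : R)) ^ μ * φ c * π ^ n =
          π ^ (e * μ + n) * ((w : R) ^ μ * φ c) := by ring
      rw [harith]
      exact Dvd.dvd.mul_right (pow_dvd_pow π (by omega)) _
  have hm : π ^ N ∣ φ (PowerSeries.coeff m f) * π ^ m := by
    have heq : φ (PowerSeries.coeff m f) * π ^ m =
        (∑ n ∈ Finset.range N, φ (PowerSeries.coeff n f) * π ^ n) -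
        ∑ n ∈ (Finset.range N).erase m, φ (PowerSeries.coeff n f) * π ^ n := by
      rw [← Finset.add_sum_erase _ _ hmN]; ring
    rw [heq]
    exact dvd_sub hS (Finset.dvd_sum hterm)
  rw [ham, map_mul, map_pow, map_natCast, hp] at hm
  have harith : (π ^ e * (w : R)) ^ μ * φ (u : ℤ_[p]) * π ^ m =
      π ^ (e * μ + m) * ((w : R) ^ μ * φ (u : ℤ_[p])) := by ring
  have harith2 : π ^ N = π ^ (e * μ + m) * π := by rw [hN, ← pow_succ]
  rw [harith, harith2] at hm
  have hπdvd : π ∣ (w : R) ^ μ * φ (u : ℤ_[p]) :=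
    (mul_dvd_mul_iff_left (pow_ne_zero (e * μ + m) hπ)).mp hm
  have hunit : IsUnit ((w : R) ^ μ * φ (u : ℤ_[p])) :=
    ((w ^ μ).isUnit).mul (u.isUnit.map φ)
  have : IsUnit π := isUnit_of_dvd_unit hπdvd hunit
  exact hpu (hp ▸ ((this.pow e).mul w.isUnit))

open PowerSeries in
/-- Extraction of the minimal `p`-valuation `μ` of the coefficients of a nonzero
`f ∈ ℤ_p[[t]]` and the first position `m` where it is attained. -/
lemma exists_mu_m {p : ℕ} [Fact p.Prime] {f : PowerSeries ℤ_[p]} (hf : f ≠ 0) :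
    ∃ (μ m : ℕ) (u : ℤ_[p]ˣ),
      coeff m f = (p : ℤ_[p]) ^ μ * u ∧
      (∀ n, (p : ℤ_[p]) ^ μ ∣ coeff n f) ∧
      (∀ n < m, (p : ℤ_[p]) ^ (μ + 1) ∣ coeff n f) := by
  have hdvd : ∀ (x : ℤ_[p]) (v : ℕ), x ≠ 0 → ((p : ℤ_[p]) ^ v ∣ x ↔ (v : ℤ) ≤ x.valuation) := by
    intro x v hx
    rw [← Ideal.mem_span_singleton, PadicInt.mem_span_pow_iff_le_valuation x hx v, Nat.cast_le]
  have hval : ∀ (x : ℤ_[p]), x ≠ 0 → (x.valuation : ℤ) = (x.valuation : ℤ) := by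
    intro x hx
    rfl
  obtain ⟨n₀, hn₀⟩ : ∃ n, coeff n f ≠ 0 := by
    by_contra hc
    push_neg at hc
    exact hf (PowerSeries.ext fun n => by rw [hc n, map_zero])
  set V : Set ℕ := {v | ∃ n, coeff n f ≠ 0 ∧ (coeff n f).valuation = v} with hV
  have hVne : V.Nonempty := ⟨_, n₀, hn₀, rfl⟩
  set μ := sInf V with hμ
  obtain ⟨n₁, hn₁, hn₁v⟩ := Nat.sInf_mem hVne
  set M : Set ℕ := {n | coeff n f ≠ 0 ∧ (coeff n f).valuation = μ} with hM
  have hMne : M.Nonempty := ⟨n₁, hn₁, hn₁v⟩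
  set m := sInf M with hm
  obtain ⟨hm0, hmv⟩ := Nat.sInf_mem hMne
  have hvm : (coeff m f).valuation = (μ : ℤ) := by rw [hval _ hm0, hmv]
  refine ⟨μ, m, PadicInt.unitCoeff hm0, ?_, ?_, ?_⟩
  · rw [mul_comm]
    have := PadicInt.unitCoeff_spec hm0
    rwa [hmv] at this
  · intro n
    by_cases hn : coeff n f = 0
    · rw [hn]; exact dvd_zero _
    · rw [hdvd _ _ hn, hval _ hn]
      exact_mod_cast Nat.sInf_le (show (coeff n f).valuation ∈ V from ⟨n, hn, rfl⟩)
  · intro n hnm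
    by_cases hn : coeff n f = 0
    · rw [hn]; exact dvd_zero _
    · rw [hdvd _ _ hn, hval _ hn]
      have h1 : μ ≤ (coeff n f).valuation := Nat.sInf_le ⟨n, hn, rfl⟩
      have h2 : (coeff n f).valuation ≠ μ := by
        intro heq
        have := Nat.sInf_le (show n ∈ M from ⟨hn, heq⟩)
        omega
      have h3 : μ + 1 ≤ (coeff n f).valuation := by omega
      exact_mod_cast h3

variable (p : ℕ) [Fact p.Prime]

/-- a nonzero `h ∈ ℤ_p[[t₀,t₁]]` (modelled as `(ℤ_p[[t₁]])[[t₀]]`) has nonzero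
specialisation `h(t₀,ζ−1)` for all but finitely many `p`-power roots of unity `ζ`.  The roots
of unity are taken in the integral closure of `ℤ_p` in an algebraic closure of `ℚ_p` (which
contains `ℤ_p[ζ]` for every such `ζ`), and `h(t₀,ζ−1) = 0` is expressed by `SpecAt … h 0`. -/
theorem stmt_6 (h : PowerSeries (PowerSeries ℤ_[p])) (hh : h ≠ 0) :
    {ζ : integralClosure ℤ_[p] (AlgebraicClosure ℚ_[p]) |
      (∃ k : ℕ, ζ ^ p ^ k = 1) ∧
      SpecAt (algebraMap ℤ_[p] (integralClosure ℤ_[p] (AlgebraicClosure ℚ_[p])))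
        (ζ - 1) h 0}.Finite := by
  classical
  set O := integralClosure ℤ_[p] (AlgebraicClosure ℚ_[p]) with hO
  have hp1 : 1 < p := (Fact.out (p := p.Prime)).one_lt
  obtain ⟨k, hk⟩ : ∃ k, PowerSeries.coeff k h ≠ 0 := by
    by_contra hc
    push_neg at hc
    exact hh (PowerSeries.ext fun n => by rw [hc n, map_zero])
  obtain ⟨μ, m, u, ham, hall, hlow⟩ := exists_mu_m hk
  set K := m + 1 with hK
  have hpK : m + 1 ≤ p ^ K := le_of_lt (Nat.lt_pow_self (n := K) hp1)
  have hfin : ({x : O | (Polynomial.X ^ (p ^ K) - 1 : Polynomial O).IsRoot x}).Finite := by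
    apply Polynomial.finite_setOf_isRoot
    have := Polynomial.X_pow_sub_C_ne_zero (R := O) (pow_pos (Fact.out (p := p.Prime)).pos K) 1
    simpa using this
  apply hfin.subset
  intro ζ hζ
  obtain ⟨⟨k', hk'⟩, hspec⟩ := hζ
  simp only [Set.mem_setOf_eq, Polynomial.IsRoot, Polynomial.eval_sub, Polynomial.eval_pow,
    Polynomial.eval_X, Polynomial.eval_one, sub_eq_zero]
  by_contra hKroot
  -- `ζ` has exact order `p ^ k₀` with `k₀ > K`
  have hord : orderOf ζ ∣ p ^ k' := orderOf_dvd_of_pow_eq_one hk'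
  obtain ⟨k₀, hk₀le, hk₀⟩ := (Nat.dvd_prime_pow Fact.out).mp hord
  have hKlt : K < k₀ := by
    by_contra hle
    push_neg at hle
    exact hKroot (orderOf_dvd_iff_pow_eq_one.mp (hk₀ ▸ pow_dvd_pow p hle))
  obtain ⟨j, rfl⟩ : ∃ j, k₀ = j + 1 := ⟨k₀ - 1, by omega⟩
  have hprim : IsPrimitiveRoot ζ (p ^ (j + 1)) := hk₀ ▸ IsPrimitiveRoot.orderOf ζ
  obtain ⟨w, hw⟩ := assoc_pow p hprim
  have hp' : ((p : ℕ) : O) = (ζ - 1) ^ (p ^ (j + 1)).totient * w := hw.symm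
  have hem : m + 1 ≤ (p ^ (j + 1)).totient := by
    rw [Nat.totient_prime_pow Fact.out (Nat.succ_pos j)]
    calc m + 1 ≤ p ^ K := hpK
      _ ≤ p ^ j := Nat.pow_le_pow_right (Fact.out (p := p.Prime)).pos (by omega)
      _ = p ^ j * 1 := (mul_one _).symm
      _ ≤ p ^ j * (p - 1) := Nat.mul_le_mul_left _ (by omega)
  have hπ : ζ - 1 ≠ 0 := by
    intro hz
    apply hKroot
    have : ζ = 1 := by rwa [sub_eq_zero] at hz
    rw [this, one_pow]
  have hE : EvalsTo (algebraMap ℤ_[p] O) (PowerSeries.coeff k h)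
      (ζ - 1) 0 := by
    have h0 : (PowerSeries.coeff k) (0 : PowerSeries O) = 0 :=
      LinearMap.map_zero _
    have := hspec k
    rwa [h0] at this
  exact key_lemma (algebraMap ℤ_[p] O) hπ w hp' hem (not_isUnit_p_s6 p) u ham hall hlow hE
end

section
/- Let p be a prime and let f, h, f₁ ∈ ℤ_p[[t₀,t₁]] be nonzero formal power series with f = h·f₁. If f(t₀,0) is nonzero and μ(f) = μ(f(t₀,0)), then h(t₀,0) and f₁(t₀,0) are nonzero, μ(h) = μ(h(t₀,0)), and μ(f₁) = μ(f₁(t₀,0)). -/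
section aux

variable {R : Type*} [CommRing R]

lemma aux_C_dvd_iff (r : R) (g : PowerSeries R) :
    PowerSeries.C r ∣ g ↔ ∀ n, r ∣ PowerSeries.coeff n g := by
  constructor
  · rintro ⟨q, rfl⟩ n
    rw [PowerSeries.coeff_C_mul]
    exact Dvd.intro _ rfl
  · intro hdvd
    refine ⟨PowerSeries.mk fun n => (hdvd n).choose, ?_⟩
    ext n
    rw [PowerSeries.coeff_C_mul, PowerSeries.coeff_mk]
    exact (hdvd n).choose_spec

lemma aux_C_prime {r : R} (hr : Prime r) : Prime (PowerSeries.C r) := by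
  have hCr : PowerSeries.C r ≠ 0 := by
    intro h0
    exact hr.ne_zero (by simpa using congrArg (PowerSeries.coeff 0) h0)
  rw [← Ideal.span_singleton_prime hCr]
  haveI : (Ideal.span ({r} : Set R)).IsPrime :=
    (Ideal.span_singleton_prime hr.ne_zero).mpr hr
  have key : Ideal.span ({PowerSeries.C r} : Set (PowerSeries R)) =
      RingHom.ker (PowerSeries.map (Ideal.Quotient.mk (Ideal.span ({r} : Set R)))) := by
    ext g
    rw [Ideal.mem_span_singleton, RingHom.mem_ker, aux_C_dvd_iff]
    constructor
    · intro hdvd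
      ext n
      simpa [Ideal.Quotient.eq_zero_iff_mem, Ideal.mem_span_singleton] using hdvd n
    · intro h0 n
      have := congrArg (PowerSeries.coeff n) h0
      simp only [PowerSeries.coeff_map, map_zero] at this
      rwa [Ideal.Quotient.eq_zero_iff_mem, Ideal.mem_span_singleton] at this
  rw [key]
  exact RingHom.ker_isPrime _

lemma aux_finite_lift {r : R} (hfin : ∀ c : R, c ≠ 0 → FiniteMultiplicity r c)
    {g : PowerSeries R} (hg : g ≠ 0) : FiniteMultiplicity (PowerSeries.C r) g := by
  obtain ⟨n, hn⟩ : ∃ n, PowerSeries.coeff n g ≠ 0 := by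
    by_contra hc
    push_neg at hc
    exact hg (PowerSeries.ext fun n => by simpa using hc n)
  obtain ⟨k, hk⟩ := (FiniteMultiplicity.def).mp (hfin _ hn)
  refine (FiniteMultiplicity.def).mpr ⟨k, fun hdvd => hk ?_⟩
  have : PowerSeries.C (r ^ (k + 1)) ∣ g := by rwa [map_pow]
  exact (aux_C_dvd_iff _ _).mp this n

lemma aux_mu_eq_multiplicity {p : ℕ} {g : R} (hfin : FiniteMultiplicity (p : R) g) :
    mu p g = multiplicity (p : R) g := by
  unfold mu
  apply le_antisymm
  · apply csSup_le ⟨0, by simp⟩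
    intro m hm
    exact hfin.le_multiplicity_of_pow_dvd hm
  · apply le_csSup
    · exact ⟨multiplicity (p : R) g, fun m hm => hfin.le_multiplicity_of_pow_dvd hm⟩
    · exact pow_multiplicity_dvd _ _

end aux

/-- if `f = h·f₁` in `ℤ_p[[t₀,t₁]]` (all nonzero), `f(t₀,0) ≠ 0` and
`μ(f) = μ(f(t₀,0))`, then the same holds for `h` and `f₁`.  Here `ℤ_p[[t₀,t₁]]` is modelled as
`(ℤ_p[[t₁]])[[t₀]]` and `f(t₀,0)` is obtained by applying the constant-coefficient map
`ℤ_p[[t₁]] → ℤ_p` to each coefficient of `f`. -/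
theorem stmt_7 (p : ℕ) [Fact p.Prime]
    (f h f₁ : PowerSeries (PowerSeries ℤ_[p]))
    (hf : f ≠ 0) (hh : h ≠ 0) (hf₁ : f₁ ≠ 0)
    (heq : f = h * f₁)
    (hf0 : PowerSeries.map (PowerSeries.constantCoeff (R := ℤ_[p])) f ≠ 0)
    (hmu : mu p f = mu p (PowerSeries.map (PowerSeries.constantCoeff (R := ℤ_[p])) f)) :
    PowerSeries.map (PowerSeries.constantCoeff (R := ℤ_[p])) h ≠ 0 ∧
    PowerSeries.map (PowerSeries.constantCoeff (R := ℤ_[p])) f₁ ≠ 0 ∧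
    mu p h = mu p (PowerSeries.map (PowerSeries.constantCoeff (R := ℤ_[p])) h) ∧
    mu p f₁ = mu p (PowerSeries.map (PowerSeries.constantCoeff (R := ℤ_[p])) f₁) := by
  let S := PowerSeries ℤ_[p]
  let R := PowerSeries S
  set φ : R →+* PowerSeries ℤ_[p] := PowerSeries.map (PowerSeries.constantCoeff (R := ℤ_[p]))
  -- primality of p in the various rings
  have hp0 : Prime ((p : ℕ) : ℤ_[p]) := PadicInt.prime_p
  have hcastS : ((p : ℕ) : S) = PowerSeries.C ((p : ℕ) : ℤ_[p]) := by
    rw [map_natCast]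
  have hcastR : ((p : ℕ) : R) = PowerSeries.C ((p : ℕ) : S) := by
    rw [map_natCast]
  have hpS : Prime ((p : ℕ) : S) := by rw [hcastS]; exact aux_C_prime hp0
  have hpR : Prime ((p : ℕ) : R) := by rw [hcastR]; exact aux_C_prime hpS
  have hpB : Prime ((p : ℕ) : PowerSeries ℤ_[p]) := hpS
  -- finiteness of multiplicities
  have hfin0 : ∀ c : ℤ_[p], c ≠ 0 → FiniteMultiplicity ((p : ℕ) : ℤ_[p]) c :=
    fun c hc => FiniteMultiplicity.of_prime_left hp0 hc
  have hfinS : ∀ c : S, c ≠ 0 → FiniteMultiplicity ((p : ℕ) : S) c := by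
    intro c hc; rw [hcastS]; exact aux_finite_lift hfin0 hc
  have hfinR : ∀ c : R, c ≠ 0 → FiniteMultiplicity ((p : ℕ) : R) c := by
    intro c hc; rw [hcastR]; exact aux_finite_lift hfinS hc
  -- specializations are nonzero
  have hmap : φ f = φ h * φ f₁ := by rw [heq, map_mul]
  have hh0 : φ h ≠ 0 := by
    intro h0; apply hf0; rw [hmap, h0, zero_mul]
  have hf10 : φ f₁ ≠ 0 := by
    intro h0; apply hf0; rw [hmap, h0, mul_zero]
  -- mu = multiplicity everywhere
  have muR : ∀ g : R, g ≠ 0 → mu p g = multiplicity ((p : ℕ) : R) g :=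
    fun g hg => aux_mu_eq_multiplicity (hfinR g hg)
  have muB : ∀ g : PowerSeries ℤ_[p], g ≠ 0 →
      mu p g = multiplicity ((p : ℕ) : PowerSeries ℤ_[p]) g :=
    fun g hg => aux_mu_eq_multiplicity (hfinS g hg)
  -- specialization does not decrease mu
  have mono : ∀ g : R, g ≠ 0 → φ g ≠ 0 → mu p g ≤ mu p (φ g) := by
    intro g hg hφg
    rw [muR g hg, muB _ hφg]
    apply (hfinS _ hφg).le_multiplicity_of_pow_dvd
    have : ((p : ℕ) : R) ^ (multiplicity ((p : ℕ) : R) g) ∣ g := pow_multiplicity_dvd _ _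
    have := map_dvd φ this
    rwa [map_pow, map_natCast] at this
  -- additivity of mu
  have addR : mu p f = mu p h + mu p f₁ := by
    rw [muR f hf, muR h hh, muR f₁ hf₁, heq]
    exact multiplicity_mul hpR (hfinR _ (heq ▸ hf))
  have addB : mu p (φ f) = mu p (φ h) + mu p (φ f₁) := by
    rw [muB _ hf0, muB _ hh0, muB _ hf10, hmap]
    exact multiplicity_mul hpB (hfinS _ (hmap ▸ hf0))
  have leh := mono h hh hh0
  have lef₁ := mono f₁ hf₁ hf10
  refine ⟨hh0, hf10, ?_, ?_⟩ <;> omega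
end

section
/- Let p be a prime and consider the power series f := t₁² + p³·t₀·t₁ + p³·(t₀ + p) and g := t₁² + p³·(t₀ + p) in ℤ_p[[t₀,t₁]]. Then (i) f and g have no common divisor that is not a unit of ℤ_p[[t₀,t₁]], and (ii) the principal ideals (f) and (g) of ℤ_p[[t₀,t₁]] are distinct. -/
open PowerSeries

section aux
variable {A : Type*} [CommRing A] [IsDomain A]

lemma myC_dvd_iff {a : A} (f : PowerSeries A) :
    (C (R := A) a) ∣ f ↔ ∀ n, a ∣ (coeff (R := A) n) f := by
  constructor
  · rintro ⟨m, rfl⟩ n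
    rw [coeff_C_mul]
    exact Dvd.intro _ rfl
  · intro h
    refine ⟨PowerSeries.mk fun n => (h n).choose, ?_⟩
    ext n
    rw [coeff_C_mul, coeff_mk]
    exact (h n).choose_spec

lemma myprime_C {a : A} (ha : Prime a) : Prime (C (R := A) a) := by
  have hI : (Ideal.span {a}).IsPrime := (Ideal.span_singleton_prime ha.1).mpr ha
  haveI : IsDomain (A ⧸ Ideal.span {a}) := (Ideal.Quotient.isDomain_iff_prime _).mpr hI
  have key : ∀ x : PowerSeries A,
      (C (R := A) a ∣ x) ↔ PowerSeries.map (Ideal.Quotient.mk (Ideal.span {a})) x = 0 := by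
    intro x
    rw [myC_dvd_iff]
    constructor
    · intro h
      ext n
      simp only [coeff_map, map_zero, Ideal.Quotient.eq_zero_iff_mem,
        Ideal.mem_span_singleton]
      exact h n
    · intro h n
      have := congrArg (coeff (R := _) n) h
      simp only [coeff_map, map_zero, Ideal.Quotient.eq_zero_iff_mem,
        Ideal.mem_span_singleton] at this
      exact this
  refine ⟨?_, ?_, ?_⟩
  · intro h
    exact ha.1 (by simpa using congrArg (constantCoeff (R := A)) h)
  · intro h
    exact ha.2.1 (by simpa using h.map (constantCoeff (R := A)))
  · intro b c hbc
    rw [key] at hbc ⊢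
    rw [key c]
    rw [map_mul] at hbc
    exact mul_eq_zero.mp hbc

end aux

/-- for `f := t₁² + p³·t₀·t₁ + p³·(t₀+p)` and `g := t₁² + p³·(t₀+p)` in
`ℤ_p[[t₀,t₁]]` (modelled as `(ℤ_p[[t₁]])[[t₀]]`, with `t₀ = X` and `t₁ = C X`):
(i) `f` and `g` have no non-unit common divisor, and (ii) `(f) ≠ (g)`. -/
theorem stmt_8 (p : ℕ) [Fact p.Prime]
    (f g : PowerSeries (PowerSeries ℤ_[p]))
    (hf : f = (PowerSeries.C (R := PowerSeries ℤ_[p]) PowerSeries.X) ^ 2 +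
        (p : PowerSeries (PowerSeries ℤ_[p])) ^ 3 * PowerSeries.X *
          PowerSeries.C (R := PowerSeries ℤ_[p]) PowerSeries.X +
        (p : PowerSeries (PowerSeries ℤ_[p])) ^ 3 *
          (PowerSeries.X + (p : PowerSeries (PowerSeries ℤ_[p]))))
    (hg : g = (PowerSeries.C (R := PowerSeries ℤ_[p]) PowerSeries.X) ^ 2 +
        (p : PowerSeries (PowerSeries ℤ_[p])) ^ 3 *
          (PowerSeries.X + (p : PowerSeries (PowerSeries ℤ_[p])))) :
    (∀ d : PowerSeries (PowerSeries ℤ_[p]), d ∣ f → d ∣ g → IsUnit d) ∧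
    Ideal.span {f} ≠ Ideal.span {g} := by
  have hpA : ((p : PowerSeries ℤ_[p])) = C (R := ℤ_[p]) (p : ℤ_[p]) := (map_natCast (C (R := ℤ_[p])) p).symm
  have hpR : ((p : PowerSeries (PowerSeries ℤ_[p]))) = C (R := PowerSeries ℤ_[p]) (p : PowerSeries ℤ_[p]) :=
    (map_natCast (C (R := PowerSeries ℤ_[p])) p).symm
  have hpprime : Prime (p : PowerSeries (PowerSeries ℤ_[p])) := by
    rw [hpR, hpA]; exact myprime_C (myprime_C (PadicInt.prime_p))
  have hXprime : Prime (X : PowerSeries (PowerSeries ℤ_[p])) := X_prime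
  have hCXprime : Prime (C (R := PowerSeries ℤ_[p]) (X : PowerSeries ℤ_[p])) := myprime_C X_prime
  have hpne : ((p : ℤ_[p])) ≠ 0 := Nat.cast_ne_zero.mpr (Fact.out : p.Prime).ne_zero
  have hccf : constantCoeff (R := PowerSeries ℤ_[p]) f = X ^ 2 + (p : PowerSeries ℤ_[p]) ^ 4 := by
    rw [hf]
    simp [map_add, map_mul, map_pow, constantCoeff_X, constantCoeff_C]
    ring
  have hccg : constantCoeff (R := PowerSeries ℤ_[p]) g = X ^ 2 + (p : PowerSeries ℤ_[p]) ^ 4 := by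
    rw [hg]
    simp [map_add, map_mul, map_pow, constantCoeff_X, constantCoeff_C]
    ring
  have hnp : ¬ (p : PowerSeries (PowerSeries ℤ_[p])) ∣ f := by
    rintro ⟨m, hm⟩
    have h1 : (X : PowerSeries ℤ_[p]) ^ 2 + (p : PowerSeries ℤ_[p]) ^ 4
        = (p : PowerSeries ℤ_[p]) * constantCoeff (R := PowerSeries ℤ_[p]) m := by
      rw [← hccf, hm, map_mul, hpR, constantCoeff_C]
    have h2 := congrArg (coeff (R := ℤ_[p]) 2) h1
    rw [map_add, coeff_X_pow, hpA, ← map_pow, coeff_C, coeff_C_mul] at h2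
    simp at h2
    exact PadicInt.prime_p.2.1 (isUnit_of_dvd_one (⟨_, h2⟩ : (p:ℤ_[p]) ∣ 1))
  have hconst_ne : (X : PowerSeries ℤ_[p]) ^ 2 + (p : PowerSeries ℤ_[p]) ^ 4 ≠ 0 := by
    intro h
    have h2 := congrArg (constantCoeff (R := ℤ_[p])) h
    simp [map_add, map_pow, constantCoeff_X] at h2
    exact (Fact.out : p.Prime).ne_zero h2
  have hnX : ¬ (X : PowerSeries (PowerSeries ℤ_[p])) ∣ f := by
    rw [X_dvd_iff, hccf]
    exact hconst_ne
  have hnCX : ¬ (C (R := PowerSeries ℤ_[p]) (X : PowerSeries ℤ_[p])) ∣ f := by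
    rintro ⟨m, hm⟩
    have h1 : (X : PowerSeries ℤ_[p]) ^ 2 + (p : PowerSeries ℤ_[p]) ^ 4
        = X * constantCoeff (R := PowerSeries ℤ_[p]) m := by
      rw [← hccf, hm, map_mul, constantCoeff_C]
    have h2 := congrArg (constantCoeff (R := ℤ_[p])) h1
    simp [map_add, map_mul, map_pow, constantCoeff_X] at h2
    exact (Fact.out : p.Prime).ne_zero h2
  have hfg : f - g = (p : PowerSeries (PowerSeries ℤ_[p])) *
      ((p : PowerSeries (PowerSeries ℤ_[p])) * ((p : PowerSeries (PowerSeries ℤ_[p])) *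
        ((X : PowerSeries (PowerSeries ℤ_[p])) *
          (C (R := PowerSeries ℤ_[p]) (X : PowerSeries ℤ_[p]) * 1)))) := by
    rw [hf, hg]; ring
  have part1 : ∀ d : PowerSeries (PowerSeries ℤ_[p]), d ∣ f → d ∣ g → IsUnit d := by
    intro d hdf hdg
    have step : ∀ {q m : PowerSeries (PowerSeries ℤ_[p])},
        Prime q → ¬ q ∣ f → d ∣ q * m → d ∣ m := by
      intro q m hq hqf hdm
      rcases hq.left_dvd_or_dvd_right_of_dvd_mul hdm with h | h
      · exact absurd (h.trans hdf) hqf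
      · exact h
    have hd := dvd_sub hdf hdg
    rw [hfg] at hd
    have h1 := step hpprime hnp hd
    have h2 := step hpprime hnp h1
    have h3 := step hpprime hnp h2
    have h4 := step hXprime hnX h3
    have h5 := step hCXprime hnCX h4
    exact isUnit_of_dvd_one h5
  refine ⟨part1, ?_⟩
  intro hspan
  have hassoc : Associated f g := Ideal.span_singleton_eq_span_singleton.mp hspan
  have hfu : IsUnit f := part1 f dvd_rfl hassoc.dvd
  have hu4 : IsUnit ((p : ℤ_[p]) ^ 4) := by
    have h1 := hfu.map (constantCoeff (R := PowerSeries ℤ_[p]))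
    rw [hccf] at h1
    have h2 := h1.map (constantCoeff (R := ℤ_[p]))
    simpa [map_add, map_pow, constantCoeff_X] using h2
  exact PadicInt.prime_p.2.1 (isUnit_of_dvd_unit (dvd_pow_self _ (by norm_num)) hu4)
end

section
/- Let p be a prime, m ≥ 1, and let f ∈ ℤ_p[[t₁,…,t_m]] be a formal power series with zero constant term whose degree-one homogeneous component is a₁t₁ + ⋯ + a_mt_m with at least one aᵢ a unit of ℤ_p. Then f is a prime (in particular irreducible) element of ℤ_p[[t₁,…,t_m]]. Moreover, if g is another power series with zero constant term and degree-one component b₁t₁ + ⋯ + b_mt_m having some bⱼ a unit, and the vectors (a₁,…,a_m) and (b₁,…,b_m) in ℤ_p^m are not equal up to multiplication by a unit of ℤ_p, then f and g are not associates in ℤ_p[[t₁,…,t_m]]. -/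
open MvPowerSeries Finsupp

namespace Stmt10

variable {m : ℕ} {R : Type*} [CommRing R]

/-- weight used for the well-founded recursion -/
def μ (i : Fin m) (e : Fin m →₀ ℕ) : ℕ := e i + 2 * ∑ j ∈ Finset.univ.erase i, e j

lemma μ_add (i : Fin m) (d e : Fin m →₀ ℕ) : μ i (d + e) = μ i d + μ i e := by
  simp only [μ, Finsupp.add_apply, Finset.sum_add_distrib]; ring

lemma μ_single (i : Fin m) : μ i (Finsupp.single i 1) = 1 := by
  have : ∑ j ∈ Finset.univ.erase i, (Finsupp.single i 1 : Fin m →₀ ℕ) j = 0 :=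
    Finset.sum_eq_zero (fun j hj => by
      rcases Finset.mem_erase.mp hj with ⟨hj, _⟩
      simp [Finsupp.single_apply, (Ne.symm hj)])
  simp [μ, this]

lemma μ_ge_two (i : Fin m) {d : Fin m →₀ ℕ} (h0 : d ≠ 0) (h1 : d ≠ Finsupp.single i 1) :
    2 ≤ μ i d := by
  by_cases hν : ∑ j ∈ Finset.univ.erase i, d j = 0
  · have hd : d = Finsupp.single i (d i) := by
      ext j
      rcases eq_or_ne j i with rfl | hj
      · simp
      · have := (Finset.sum_eq_zero_iff.mp hν) j (Finset.mem_erase.mpr ⟨hj, Finset.mem_univ j⟩)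
        simp [Finsupp.single_apply, Ne.symm hj, this]
    have h2 : d i ≠ 0 := by
      intro h
      apply h0; rw [hd, h, Finsupp.single_zero]
    have h3 : d i ≠ 1 := by
      intro h; apply h1; rw [hd, h]
    simp only [μ, hν, mul_zero, add_zero]
    omega
  · simp only [μ]; omega


lemma erase_facts {i : Fin m} {e : Fin m →₀ ℕ} {x : (Fin m →₀ ℕ) × (Fin m →₀ ℕ)}
    (hx : x ∈ (Finset.HasAntidiagonal.antidiagonal (e + Finsupp.single i 1)).erase (e, Finsupp.single i 1)) :
    x.2 ≠ Finsupp.single i 1 ∧ (x.2 ≠ 0 → μ i x.1 < μ i e) := by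
  rcases Finset.mem_erase.mp hx with ⟨hne, hmem⟩
  have hsum : x.1 + x.2 = e + Finsupp.single i 1 := Finset.HasAntidiagonal.mem_antidiagonal.mp hmem
  have h2 : x.2 ≠ Finsupp.single i 1 := by
    intro h
    apply hne
    rw [h] at hsum
    have := add_right_cancel hsum
    rw [Prod.ext_iff]; exact ⟨this, h⟩
  refine ⟨h2, fun h0 => ?_⟩
  have hμ : μ i x.1 + μ i x.2 = μ i e + 1 := by
    rw [← μ_add, hsum, μ_add, μ_single]
  have := μ_ge_two i h0 h2
  omega

noncomputable def wq (i : Fin m) (b : R) (f g : MvPowerSeries (Fin m) R)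
    (e : Fin m →₀ ℕ) : R :=
  b * (MvPowerSeries.coeff (e + Finsupp.single i 1) g -
    ∑ x ∈ Finset.HasAntidiagonal.antidiagonal (e + Finsupp.single i 1),
      (if h : μ i x.1 < μ i e then wq i b f g x.1 else 0) *
        (if x.2 = 0 ∨ x.2 = Finsupp.single i 1 then 0 else MvPowerSeries.coeff x.2 f))
  termination_by μ i e
  decreasing_by exact h


lemma coeff_split (i : Fin m) (q f : MvPowerSeries (Fin m) R) (e : Fin m →₀ ℕ) :
    MvPowerSeries.coeff (e + Finsupp.single i 1) (q * f) =
      MvPowerSeries.coeff e q * MvPowerSeries.coeff (Finsupp.single i 1) f +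
      ∑ x ∈ (Finset.HasAntidiagonal.antidiagonal (e + Finsupp.single i 1)).erase (e, Finsupp.single i 1),
        MvPowerSeries.coeff x.1 q * MvPowerSeries.coeff x.2 f := by
  classical
  rw [MvPowerSeries.coeff_mul]
  rw [← Finset.add_sum_erase _
    (fun x => MvPowerSeries.coeff x.1 q * MvPowerSeries.coeff x.2 f)
    (show ((e, Finsupp.single i 1) : (Fin m →₀ ℕ) × (Fin m →₀ ℕ)) ∈
        Finset.HasAntidiagonal.antidiagonal (e + Finsupp.single i 1) from Finset.HasAntidiagonal.mem_antidiagonal.mpr rfl)]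

variable {i : Fin m} {f : MvPowerSeries (Fin m) R}

noncomputable def wqS (i : Fin m) (b : R) (f g : MvPowerSeries (Fin m) R) :
    MvPowerSeries (Fin m) R := wq i b f g

lemma coeff_wqS (b : R) (g : MvPowerSeries (Fin m) R) (e : Fin m →₀ ℕ) :
    MvPowerSeries.coeff e (wqS i b f g) = wq i b f g e := rfl

/-- The key computation: `wq` is a genuine quotient in division by `f`. -/
lemma coeff_wq_mul (hf0 : MvPowerSeries.constantCoeff f = 0)
    (b : R) (hb : b * MvPowerSeries.coeff (Finsupp.single i 1) f = 1)
    (g : MvPowerSeries (Fin m) R) (e : Fin m →₀ ℕ) :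
    MvPowerSeries.coeff (e + Finsupp.single i 1)
      (wqS i b f g * f) =
      MvPowerSeries.coeff (e + Finsupp.single i 1) g := by
  classical
  rw [coeff_split]
  have hsum : (∑ x ∈ Finset.HasAntidiagonal.antidiagonal (e + Finsupp.single i 1),
      (if _ : μ i x.1 < μ i e then wq i b f g x.1 else 0) *
        (if x.2 = 0 ∨ x.2 = Finsupp.single i 1 then 0 else MvPowerSeries.coeff x.2 f)) =
      ∑ x ∈ (Finset.HasAntidiagonal.antidiagonal (e + Finsupp.single i 1)).erase (e, Finsupp.single i 1),
        MvPowerSeries.coeff x.1 (wqS i b f g) *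
          MvPowerSeries.coeff x.2 f := by
    rw [← Finset.add_sum_erase _ _
      (show ((e, Finsupp.single i 1) : (Fin m →₀ ℕ) × (Fin m →₀ ℕ)) ∈
        Finset.HasAntidiagonal.antidiagonal (e + Finsupp.single i 1) from Finset.HasAntidiagonal.mem_antidiagonal.mpr rfl)]
    simp only [eq_self_iff_true, or_true, if_true, mul_zero, zero_add]
    apply Finset.sum_congr rfl
    intro x hx
    obtain ⟨h2, hlt⟩ := erase_facts hx
    by_cases h0 : x.2 = 0
    · have : MvPowerSeries.coeff x.2 f = 0 := by rw [h0]; exact hf0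
      rw [this, if_pos (Or.inl h0), mul_zero, mul_zero]
    · rw [dif_pos (hlt h0), if_neg (by tauto)]
      rfl
  rw [coeff_wqS]
  conv_lhs => rw [wq]
  rw [hsum]
  set S := ∑ x ∈ (Finset.HasAntidiagonal.antidiagonal (e + Finsupp.single i 1)).erase (e, Finsupp.single i 1),
        MvPowerSeries.coeff x.1 (wqS i b f g) * MvPowerSeries.coeff x.2 f with hS
  have h3 : b * (MvPowerSeries.coeff (e + Finsupp.single i 1) g - S) *
      MvPowerSeries.coeff (Finsupp.single i 1) f =
      (MvPowerSeries.coeff (e + Finsupp.single i 1) g - S) *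
        (b * MvPowerSeries.coeff (Finsupp.single i 1) f) := by ring
  rw [h3, hb, mul_one]
  ring


/-- remainders: series not involving the variable `i` -/
def IFree (i : Fin m) (r : MvPowerSeries (Fin m) R) : Prop :=
  ∀ e : Fin m →₀ ℕ, e i ≠ 0 → MvPowerSeries.coeff e r = 0

lemma IFree.mul {i : Fin m} {r s : MvPowerSeries (Fin m) R} (hr : IFree i r)
    (hs : IFree i s) : IFree i (r * s) := by
  classical
  intro e he
  rw [MvPowerSeries.coeff_mul]
  apply Finset.sum_eq_zero
  intro x hx
  have hsum : x.1 + x.2 = e := Finset.HasAntidiagonal.mem_antidiagonal.mp hx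
  have : x.1 i + x.2 i = e i := by rw [← Finsupp.add_apply, hsum]
  rcases Nat.eq_zero_or_pos (x.1 i) with h1 | h1
  · have : x.2 i ≠ 0 := by omega
    rw [hs x.2 this, mul_zero]
  · rw [hr x.1 (by omega), zero_mul]

/-- Uniqueness half of Weierstrass division. -/
lemma wdiv_unique (hf0 : MvPowerSeries.constantCoeff f = 0)
    (a : R) (ha : IsUnit a) (haf : a = MvPowerSeries.coeff (Finsupp.single i 1) f)
    {q r : MvPowerSeries (Fin m) R} (hr : IFree i r) (h : q * f + r = 0) :
    q = 0 := by
  classical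
  by_contra hq
  have hex : ∃ n : ℕ, ∃ e : Fin m →₀ ℕ, μ i e = n ∧ MvPowerSeries.coeff e q ≠ 0 := by
    have : ∃ e, MvPowerSeries.coeff e q ≠ 0 := by
      by_contra hc
      push_neg at hc
      exact hq (MvPowerSeries.ext fun e => by rw [hc e, map_zero])
    obtain ⟨e, he⟩ := this
    exact ⟨μ i e, e, rfl, he⟩
  obtain ⟨e, hen, he⟩ := Nat.find_spec hex
  have hmin : ∀ d : Fin m →₀ ℕ, μ i d < μ i e → MvPowerSeries.coeff d q = 0 := by
    intro d hd
    by_contra hc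
    exact Nat.find_min hex (by omega : μ i d < Nat.find hex) ⟨d, rfl, hc⟩
  have h1 : MvPowerSeries.coeff (e + Finsupp.single i 1) (q * f + r) = 0 := by
    rw [h, map_zero]
  rw [map_add, coeff_split, hr _ (by simp), add_zero] at h1
  have h2 : ∑ x ∈ (Finset.HasAntidiagonal.antidiagonal (e + Finsupp.single i 1)).erase (e, Finsupp.single i 1),
      MvPowerSeries.coeff x.1 q * MvPowerSeries.coeff x.2 f = 0 := by
    apply Finset.sum_eq_zero
    intro x hx
    obtain ⟨hx2, hlt⟩ := erase_facts hx
    by_cases h0 : x.2 = 0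
    · rw [h0]
      show _ * MvPowerSeries.constantCoeff f = 0
      rw [hf0, mul_zero]
    · rw [hmin x.1 (hlt h0), zero_mul]
  rw [h2, add_zero, ← haf] at h1
  rcases ha with ⟨u, rfl⟩
  rw [Units.mul_left_eq_zero] at h1
  exact he h1

/-- Division with remainder by `f`. -/
lemma wdiv_exists (hf0 : MvPowerSeries.constantCoeff f = 0)
    (a : Rˣ) (haf : (a : R) = MvPowerSeries.coeff (Finsupp.single i 1) f)
    (g : MvPowerSeries (Fin m) R) :
    ∃ q r : MvPowerSeries (Fin m) R, IFree i r ∧ g = q * f + r := by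
  classical
  have hb : (↑a⁻¹ : R) * MvPowerSeries.coeff (Finsupp.single i 1) f = 1 := by
    rw [← haf, Units.inv_mul]
  refine ⟨wqS i (↑a⁻¹) f g, g - wqS i (↑a⁻¹) f g * f, ?_, by ring⟩
  intro e he
  have : Finsupp.single i 1 ≤ e := by
    rw [Finsupp.single_le_iff]
    omega
  obtain ⟨e', he'⟩ : ∃ e', e = e' + Finsupp.single i 1 :=
    ⟨e - Finsupp.single i 1, by rw [tsub_add_cancel_of_le this]⟩
  rw [map_sub, he', coeff_wq_mul hf0 _ hb, sub_self]

theorem prime_of_unit_linear_coeff [IsDomain R]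
    (hf0 : MvPowerSeries.constantCoeff f = 0)
    (hfu : IsUnit (MvPowerSeries.coeff (Finsupp.single i 1) f)) :
    Prime f := by
  classical
  obtain ⟨a, haf⟩ := hfu
  constructor
  · intro h
    rw [h, map_zero] at haf
    exact a.ne_zero haf
  constructor
  · intro h
    have := IsUnit.map (MvPowerSeries.constantCoeff) h
    rw [hf0] at this
    exact not_isUnit_zero this
  · intro g h hdvd
    obtain ⟨qg, rg, hrg, hg⟩ := wdiv_exists hf0 a haf g
    obtain ⟨qh, rh, hrh, hh⟩ := wdiv_exists hf0 a haf h
    obtain ⟨w, hw⟩ := hdvd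
    have key : (w - qg * qh * f - qg * rh - qh * rg) * f + (- (rg * rh)) = 0 := by
      have : rg * rh = (qg * f + rg) * (qh * f + rh) - (qg * qh * f + qg * rh + qh * rg) * f := by
        ring
      rw [this, ← hg, ← hh, hw]
      ring
    have hz := wdiv_unique hf0 (a : R) a.isUnit haf (fun e he => by
      rw [map_neg, (hrg.mul hrh) e he, neg_zero]) key
    have : rg * rh = 0 := by
      have h0 : (0 : MvPowerSeries (Fin m) R) * f + (- (rg * rh)) = 0 := hz ▸ key
      rw [zero_mul, zero_add, neg_eq_zero] at h0
      exact h0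
    rcases mul_eq_zero.mp this with h0 | h0
    · left
      rw [hg, h0, add_zero]
      exact ⟨qg, mul_comm qg f⟩
    · right
      rw [hh, h0, add_zero]
      exact ⟨qh, mul_comm qh f⟩


lemma coeff_single_mul (hf0 : MvPowerSeries.constantCoeff f = 0)
    (u : MvPowerSeries (Fin m) R) (j : Fin m) :
    MvPowerSeries.coeff (Finsupp.single j 1) (f * u) =
      MvPowerSeries.constantCoeff u *
        MvPowerSeries.coeff (Finsupp.single j 1) f := by
  classical
  rw [MvPowerSeries.coeff_mul, Finsupp.antidiagonal_single, Finset.sum_map]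
  have h1 : Finset.HasAntidiagonal.antidiagonal (1 : ℕ) = {(0,1),(1,0)} := by decide
  rw [h1, Finset.sum_pair (by decide : ((0:ℕ),(1:ℕ)) ≠ (1,0))]
  simp only [Function.Embedding.coe_prodMap, Function.Embedding.coeFn_mk, Prod.map_apply,
    Finsupp.single_zero, MvPowerSeries.coeff_zero_eq_constantCoeff, hf0, zero_mul, zero_add]
  ring

end Stmt10

/-- a power series `f ∈ ℤ_p[[t₁,…,t_m]]` with zero constant term whose
degree-one homogeneous component has some unit coefficient is a prime (in particular
irreducible) element; moreover two such series whose degree-one coefficient vectors are not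
equal up to multiplication by a unit of `ℤ_p` are not associates. -/
theorem stmt_10 (p : ℕ) [Fact p.Prime] (m : ℕ) (hm : 1 ≤ m)
    (f : MvPowerSeries (Fin m) ℤ_[p])
    (hf0 : MvPowerSeries.constantCoeff f = 0)
    (hfu : ∃ i : Fin m, IsUnit (MvPowerSeries.coeff (Finsupp.single i 1) f)) :
    (Prime f ∧ Irreducible f) ∧
    ∀ g : MvPowerSeries (Fin m) ℤ_[p],
      MvPowerSeries.constantCoeff g = 0 →
      (∃ j : Fin m, IsUnit (MvPowerSeries.coeff (Finsupp.single j 1) g)) →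
      (¬ ∃ c : ℤ_[p], IsUnit c ∧ ∀ i : Fin m,
          MvPowerSeries.coeff (Finsupp.single i 1) g =
            c * MvPowerSeries.coeff (Finsupp.single i 1) f) →
      ¬ Associated f g := by
  obtain ⟨i, hi⟩ := hfu
  have hprime : Prime f := Stmt10.prime_of_unit_linear_coeff hf0 hi
  have : IsDomain (MvPowerSeries (Fin m) ℤ_[p]) := NoZeroDivisors.to_isDomain _
  have hirr := @Prime.irreducible (MvPowerSeries (Fin m) ℤ_[p]) _ _ f hprime
  refine ⟨⟨hprime, hirr⟩, ?_⟩
  intro g hg0 hgu hnc hassoc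
  obtain ⟨u, hu⟩ := hassoc
  apply hnc
  refine ⟨MvPowerSeries.constantCoeff (↑u : MvPowerSeries (Fin m) ℤ_[p]), ?_, ?_⟩
  · exact IsUnit.map (MvPowerSeries.constantCoeff) u.isUnit
  · intro j
    rw [← hu, Stmt10.coeff_single_mul hf0]
end

section
/- Let p be a prime and n ≥ 0. Then p is a prime element of the power series ring ℤ_p[[t₀,…,t_n]]; consequently, for nonzero f, g ∈ ℤ_p[[t₀,…,t_n]] the μ-invariant is additive: μ(f·g) = μ(f) + μ(g). -/
/-- A constant divides a multivariate power series iff it divides every coefficient. -/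
lemma C_dvd_iff_coeff {σ R : Type*} [CommRing R] (a : R) (f : MvPowerSeries σ R) :
    MvPowerSeries.C (σ := σ) a ∣ f ↔ ∀ d, a ∣ MvPowerSeries.coeff d f := by
  constructor
  · rintro ⟨g, rfl⟩ d
    rw [MvPowerSeries.coeff_C_mul]
    exact Dvd.intro _ rfl
  · intro h
    refine ⟨fun d => Classical.choose (h d), ?_⟩
    ext d
    erw [MvPowerSeries.coeff_C_mul]
    exact Classical.choose_spec (h d)

lemma padicInt_finite_mult {p : ℕ} [Fact p.Prime] {c : ℤ_[p]} (hc : c ≠ 0) :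
    FiniteMultiplicity (p : ℤ_[p]) c :=
  FiniteMultiplicity.of_not_isUnit PadicInt.prime_p.not_isUnit hc

lemma finite_mult_mvps {p : ℕ} [Fact p.Prime] {n : ℕ}
    {f : MvPowerSeries (Fin (n + 1)) ℤ_[p]} (hf : f ≠ 0) :
    FiniteMultiplicity ((p : MvPowerSeries (Fin (n + 1)) ℤ_[p])) f := by
  obtain ⟨d, hd⟩ : ∃ d, MvPowerSeries.coeff d f ≠ 0 := by
    by_contra h
    push_neg at h
    exact hf (MvPowerSeries.ext fun d => by simp [h d])
  obtain ⟨m, hm⟩ := padicInt_finite_mult (p := p) hd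
  refine ⟨m, fun hdvd => hm ?_⟩
  have hC : (p : MvPowerSeries (Fin (n + 1)) ℤ_[p]) =
      MvPowerSeries.C (σ := Fin (n + 1)) (p : ℤ_[p]) :=
    (map_natCast (MvPowerSeries.C (σ := Fin (n + 1)) (R := ℤ_[p])) p).symm
  have : (MvPowerSeries.C (σ := Fin (n + 1))) ((p : ℤ_[p]) ^ (m + 1)) ∣ f := by
    rw [map_pow, ← hC]; exact hdvd
  exact (C_dvd_iff_coeff _ f).1 this d

/-- `p` is a prime element of `ℤ_p[[t₀,…,t_n]]`, and consequently the
`μ`-invariant is additive on products of nonzero power series. -/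
theorem stmt_13 (p : ℕ) [Fact p.Prime] (n : ℕ) :
    Prime ((p : MvPowerSeries (Fin (n + 1)) ℤ_[p])) ∧
    ∀ f g : MvPowerSeries (Fin (n + 1)) ℤ_[p], f ≠ 0 → g ≠ 0 →
      mu p (f * g) = mu p f + mu p g := by
  haveI : IsDomain (MvPowerSeries (Fin (n + 1)) ℤ_[p]) := NoZeroDivisors.to_isDomain _
  -- `p ∣ f` iff the reduction mod `p` is zero
  have key : ∀ f : MvPowerSeries (Fin (n + 1)) ℤ_[p],
      (p : MvPowerSeries (Fin (n + 1)) ℤ_[p]) ∣ f ↔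
      MvPowerSeries.map (σ := Fin (n + 1)) (PadicInt.toZMod (p := p)) f = 0 := by
    intro f
    have hC : (p : MvPowerSeries (Fin (n + 1)) ℤ_[p]) =
        MvPowerSeries.C (σ := Fin (n + 1)) (p : ℤ_[p]) :=
      (map_natCast (MvPowerSeries.C (σ := Fin (n + 1)) (R := ℤ_[p])) p).symm
    rw [hC, C_dvd_iff_coeff]
    constructor
    · intro h
      ext d
      rw [MvPowerSeries.coeff_map, MvPowerSeries.coeff_zero]
      have := h d
      rwa [← Ideal.mem_span_singleton, ← PadicInt.maximalIdeal_eq_span_p,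
        ← PadicInt.ker_toZMod, RingHom.mem_ker] at this
    · intro h d
      have := congrArg (MvPowerSeries.coeff (R := ZMod p) d) h
      rw [MvPowerSeries.coeff_map, MvPowerSeries.coeff_zero] at this
      rwa [← Ideal.mem_span_singleton, ← PadicInt.maximalIdeal_eq_span_p,
        ← PadicInt.ker_toZMod, RingHom.mem_ker]
  have hprime : Prime ((p : MvPowerSeries (Fin (n + 1)) ℤ_[p])) := by
    constructor
    · intro h0
      exact PadicInt.prime_p.ne_zero (by
        simpa using congrArg (MvPowerSeries.constantCoeff (σ := Fin (n + 1)) (R := ℤ_[p])) h0)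
    constructor
    · intro hu
      have := MvPowerSeries.isUnit_iff_constantCoeff.mp hu
      rw [map_natCast] at this
      exact PadicInt.prime_p.not_isUnit (by exact_mod_cast this)
    · intro a b hab
      rw [key] at hab ⊢
      rw [key b]
      rw [map_mul] at hab
      exact mul_eq_zero.mp hab
  refine ⟨hprime, fun f g hf hg => ?_⟩
  have hff := finite_mult_mvps (p := p) hf
  have hgf := finite_mult_mvps (p := p) hg
  have hfg := Prime.finiteMultiplicity_mul (α := MvPowerSeries (Fin (n + 1)) ℤ_[p]) hprime hff hgf
  have hmu : ∀ h : MvPowerSeries (Fin (n + 1)) ℤ_[p],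
      FiniteMultiplicity ((p : MvPowerSeries (Fin (n + 1)) ℤ_[p])) h →
      mu p h = multiplicity ((p : MvPowerSeries (Fin (n + 1)) ℤ_[p])) h := by
    intro h hh
    have : {m : ℕ | (p : MvPowerSeries (Fin (n + 1)) ℤ_[p]) ^ m ∣ h} =
        Set.Iic (multiplicity ((p : MvPowerSeries (Fin (n + 1)) ℤ_[p])) h) := by
      ext m
      exact hh.pow_dvd_iff_le_multiplicity
    rw [mu, this, csSup_Iic]
  rw [hmu _ hfg, hmu _ hff, hmu _ hgf, multiplicity_mul hprime hfg]
end

section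
/- Let p be a prime, and let f ∈ ℤ_p[[t₀,t₁]] be of the form f = u·P, where u is a unit of ℤ_p[[t₀,t₁]] and P = t₀^m + Σ_{i=0}^{m−1} aᵢ(t₁)·t₀^i is a distinguished polynomial of degree m in t₀ over ℤ_p[[t₁]], i.e. each aᵢ(t₁) lies in the ideal (p,t₁). Then for every p-power root of unity ζ, the specialization satisfies f(t₀,ζ−1) = u′·P′ in ℤ_p[ζ][[t₀]], where u′ := u(t₀,ζ−1) is a unit of ℤ_p[ζ][[t₀]] and P′ := t₀^m + Σ_{i=0}^{m−1} aᵢ(ζ−1)·t₀^i is a distinguished polynomial of degree m in t₀ over ℤ_p[ζ], i.e. each aᵢ(ζ−1) lies in the maximal ideal of ℤ_p[ζ]. -/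
namespace Stmt14Aux

variable {R S : Type*} [CommRing R] [CommRing S] {φ : R →+* S} {x : S}

theorem evalsTo_add {g h : PowerSeries R} {y z : S} (hg : EvalsTo φ g x y)
    (hh : EvalsTo φ h x z) : EvalsTo φ (g + h) x (y + z) := by
  intro N
  have := dvd_add (hg N) (hh N)
  simpa [Finset.sum_add_distrib, add_mul, sub_add_sub_comm] using this

theorem evalsTo_zero : EvalsTo φ 0 x 0 := by
  intro N; simp

theorem evalsTo_one : EvalsTo φ 1 x 1 := by
  intro N
  rcases N with _ | N
  · simp
  · have : ∑ n ∈ Finset.range (N + 1), φ ((PowerSeries.coeff n) 1) * x ^ n = 1 := by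
      rw [Finset.sum_eq_single 0]
      · simp
      · intro b _ hb
        simp [PowerSeries.coeff_one, hb]
      · simp
    simp [this]

theorem evalsTo_neg {g : PowerSeries R} {y : S} (hg : EvalsTo φ g x y) :
    EvalsTo φ (-g) x (-y) := by
  intro N
  have h1 := (hg N).neg_right
  have e : -(y - ∑ n ∈ Finset.range N, φ (PowerSeries.coeff n g) * x ^ n)
      = -y - ∑ n ∈ Finset.range N, φ (PowerSeries.coeff n (-g)) * x ^ n := by
    simp only [map_neg, neg_mul, Finset.sum_neg_distrib]
    abel
  rw [e] at h1; exact h1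

theorem evalsTo_sum {ι : Type*} (s : Finset ι) (g : ι → PowerSeries R) (y : ι → S)
    (h : ∀ i ∈ s, EvalsTo φ (g i) x (y i)) :
    EvalsTo φ (∑ i ∈ s, g i) x (∑ i ∈ s, y i) := by
  classical
  induction s using Finset.induction_on with
  | empty => simpa using (evalsTo_zero (φ := φ) (x := x))
  | insert a s' hni ih =>
    rw [Finset.sum_insert hni, Finset.sum_insert hni]
    exact evalsTo_add (h a (Finset.mem_insert_self a s'))
      (ih fun i hi => h i (Finset.mem_insert_of_mem hi))

theorem partial_mul (g h : PowerSeries R) (N : ℕ) :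
    x ^ N ∣ ((∑ n ∈ Finset.range N, φ (PowerSeries.coeff n g) * x ^ n) *
        (∑ n ∈ Finset.range N, φ (PowerSeries.coeff n h) * x ^ n) -
      ∑ n ∈ Finset.range N, φ (PowerSeries.coeff n (g * h)) * x ^ n) := by
  classical
  have hset : (Finset.range N).biUnion Finset.HasAntidiagonal.antidiagonal
      = (Finset.range N ×ˢ Finset.range N).filter (fun ij => ij.1 + ij.2 < N) := by
    ext ⟨i, j⟩
    simp only [Finset.mem_biUnion, Finset.mem_range, Finset.HasAntidiagonal.mem_antidiagonal,
      Finset.mem_filter, Finset.mem_product]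
    constructor
    · rintro ⟨n, hn, rfl⟩; omega
    · rintro ⟨⟨hi, hj⟩, hij⟩; exact ⟨i + j, hij, rfl⟩
  have hdisj : (↑(Finset.range N) : Set ℕ).PairwiseDisjoint Finset.HasAntidiagonal.antidiagonal := by
    intro a _ b _ hab
    simp only [Function.onFun, Finset.disjoint_left]
    intro ij h1 h2
    rw [Finset.HasAntidiagonal.mem_antidiagonal] at h1 h2
    exact hab (h1.symm.trans h2)
  have key : ∑ n ∈ Finset.range N, φ (PowerSeries.coeff n (g * h)) * x ^ n
      = ∑ ij ∈ (Finset.range N ×ˢ Finset.range N).filter (fun ij => ij.1 + ij.2 < N),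
          (φ (PowerSeries.coeff ij.1 g) * x ^ ij.1) *
            (φ (PowerSeries.coeff ij.2 h) * x ^ ij.2) := by
    rw [← hset, Finset.sum_biUnion hdisj]
    refine Finset.sum_congr rfl fun n _ => ?_
    rw [PowerSeries.coeff_mul, map_sum, Finset.sum_mul]
    refine Finset.sum_congr rfl fun ij hij => ?_
    rw [Finset.HasAntidiagonal.mem_antidiagonal] at hij
    rw [map_mul, ← hij, pow_add]
    ring
  rw [key, Finset.sum_mul_sum, ← Finset.sum_product',
    ← Finset.sum_filter_add_sum_filter_not (Finset.range N ×ˢ Finset.range N)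
      (fun ij => ij.1 + ij.2 < N), add_sub_cancel_left]
  refine Finset.dvd_sum fun ij hij => ?_
  rw [Finset.mem_filter, not_lt] at hij
  have : x ^ ij.1 * x ^ ij.2 = x ^ N * x ^ (ij.1 + ij.2 - N) := by
    rw [← pow_add, ← pow_add]
    congr 1
    omega
  calc x ^ N ∣ x ^ ij.1 * x ^ ij.2 := this ▸ Dvd.intro _ rfl
  _ ∣ _ := ⟨φ (PowerSeries.coeff ij.1 g) * φ (PowerSeries.coeff ij.2 h), by ring⟩

theorem evalsTo_mul {g h : PowerSeries R} {y z : S} (hg : EvalsTo φ g x y)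
    (hh : EvalsTo φ h x z) : EvalsTo φ (g * h) x (y * z) := by
  intro N
  obtain ⟨d1, hd1⟩ := hg N
  obtain ⟨d2, hd2⟩ := hh N
  obtain ⟨d3, hd3⟩ := partial_mul (φ := φ) (x := x) g h N
  refine ⟨y * d2 + (∑ n ∈ Finset.range N, φ (PowerSeries.coeff n h) * x ^ n) * d1 + d3, ?_⟩
  have e1 : y - ∑ n ∈ Finset.range N, φ (PowerSeries.coeff n g) * x ^ n = x ^ N * d1 := hd1
  have e2 : z - ∑ n ∈ Finset.range N, φ (PowerSeries.coeff n h) * x ^ n = x ^ N * d2 := hd2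
  linear_combination y * e2 + (∑ n ∈ Finset.range N, φ (PowerSeries.coeff n h) * x ^ n) * e1 + hd3

theorem evalsTo_inv {g h : PowerSeries R} {y z : S} (hg : EvalsTo φ g x y)
    (hgh : g * h = 1) (hyz : y * z = 1) : EvalsTo φ h x z := by
  intro N
  obtain ⟨d1, hd1⟩ := hg N
  obtain ⟨d3, hd3⟩ := partial_mul (φ := φ) (x := x) g h N
  obtain ⟨d4, hd4⟩ := evalsTo_one (φ := φ) (x := x) N
  have hgh' : ∑ n ∈ Finset.range N, φ (PowerSeries.coeff n (g * h)) * x ^ n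
      = ∑ n ∈ Finset.range N, φ (PowerSeries.coeff n (1 : PowerSeries R)) * x ^ n := by
    rw [hgh]
  refine ⟨z * (d4 - d3 - d1 * (∑ n ∈ Finset.range N, φ (PowerSeries.coeff n h) * x ^ n)), ?_⟩
  linear_combination z * hd4 - z * hd3
    - z * (∑ n ∈ Finset.range N, φ (PowerSeries.coeff n h) * x ^ n) * hd1
    + (∑ n ∈ Finset.range N, φ (PowerSeries.coeff n h) * x ^ n) * hyz - z * hgh'

theorem evalsTo_unique [IsDomain S] [IsNoetherianRing S] (hx : ¬ IsUnit x)
    {g : PowerSeries R} {y y' : S} (h1 : EvalsTo φ g x y) (h2 : EvalsTo φ g x y') :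
    y = y' := by
  have hmem : ∀ i : ℕ, y - y' ∈ (Ideal.span {x} : Ideal S) ^ i := by
    intro i
    rw [Ideal.span_singleton_pow, Ideal.mem_span_singleton]
    have := dvd_sub (h1 i) (h2 i)
    simpa using this
  have hbot := Ideal.iInf_pow_eq_bot_of_isDomain
    (I := Ideal.span {x}) (by simpa [Ideal.span_singleton_eq_top] using hx)
  have : y - y' ∈ (⊥ : Ideal S) := by
    rw [← hbot]
    exact (Submodule.mem_iInf _).mpr hmem
  exact sub_eq_zero.mp ((Submodule.mem_bot S).mp this)

theorem specAt_mul {g h : PowerSeries (PowerSeries R)} {G H : PowerSeries S}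
    (hg : SpecAt φ x g G) (hh : SpecAt φ x h H) : SpecAt φ x (g * h) (G * H) := by
  intro k
  rw [show PowerSeries.coeff k (g * h)
      = ∑ ij ∈ Finset.HasAntidiagonal.antidiagonal k,
          PowerSeries.coeff ij.1 g * PowerSeries.coeff ij.2 h from PowerSeries.coeff_mul ..,
    show PowerSeries.coeff k (G * H)
      = ∑ ij ∈ Finset.HasAntidiagonal.antidiagonal k,
          PowerSeries.coeff ij.1 G * PowerSeries.coeff ij.2 H from PowerSeries.coeff_mul ..]
  exact evalsTo_sum _ _ _ fun ij _ => evalsTo_mul (hg ij.1) (hh ij.2)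

theorem coeff_zero_mul_coeff_zero {A : Type*} [CommRing A] {a b : PowerSeries A}
    (hab : a * b = 1) : PowerSeries.coeff 0 a * PowerSeries.coeff 0 b = 1 := by
  have := congrArg (PowerSeries.constantCoeff) hab
  rw [map_mul, map_one] at this
  simpa [PowerSeries.coeff_zero_eq_constantCoeff] using this

theorem coeff_succ_of_mul_eq_one {A : Type*} [CommRing A] {k : ℕ} {a b : PowerSeries A}
    (hab : a * b = 1) :
    PowerSeries.coeff (k+1) b = PowerSeries.coeff 0 b *
      (- ∑ ij ∈ Finset.HasAntidiagonal.antidiagonal k,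
        PowerSeries.coeff (ij.1 + 1) a * PowerSeries.coeff ij.2 b) := by
  have h0 := coeff_zero_mul_coeff_zero hab
  have h1 : (PowerSeries.coeff (k+1)) (a * b) = 0 := by
    rw [hab, PowerSeries.coeff_one]
    simp
  rw [PowerSeries.coeff_mul, Finset.Nat.antidiagonal_succ, Finset.sum_cons,
    Finset.sum_map] at h1
  simp only [Function.Embedding.coe_prodMap, Function.Embedding.coeFn_mk,
    Function.Embedding.refl_apply, Prod.map_fst, Prod.map_snd, Prod.map_apply,
    Prod.fst, Prod.snd] at h1
  have hs : PowerSeries.coeff 0 a * PowerSeries.coeff (k+1) b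
      = - ∑ ij ∈ Finset.HasAntidiagonal.antidiagonal k,
          PowerSeries.coeff (ij.1 + 1) a * PowerSeries.coeff ij.2 b := by
    rw [← Nat.succ_eq_add_one]
    linear_combination h1
  calc PowerSeries.coeff (k+1) b
      = (PowerSeries.coeff 0 a * PowerSeries.coeff 0 b) *
        PowerSeries.coeff (k+1) b := by rw [h0, one_mul]
    _ = PowerSeries.coeff 0 b *
        (PowerSeries.coeff 0 a * PowerSeries.coeff (k+1) b) := by ring
    _ = _ := by rw [hs]

theorem specAt_inv {u v : PowerSeries (PowerSeries R)} {U V : PowerSeries S}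
    (hu : SpecAt φ x u U) (huv : u * v = 1) (hUV : U * V = 1) : SpecAt φ x v V := by
  intro k
  induction k using Nat.strong_induction_on with
  | _ k ih =>
    rcases k with _ | k
    · exact evalsTo_inv (hu 0) (coeff_zero_mul_coeff_zero huv) (coeff_zero_mul_coeff_zero hUV)
    · rw [coeff_succ_of_mul_eq_one huv, coeff_succ_of_mul_eq_one hUV]
      refine evalsTo_mul (ih 0 (Nat.succ_pos _)) (evalsTo_neg (evalsTo_sum _ _ _ fun ij hij => ?_))
      have hj : ij.2 < k + 1 := by
        rw [Finset.HasAntidiagonal.mem_antidiagonal] at hij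
        omega
      exact evalsTo_mul (hu (ij.1 + 1)) (ih ij.2 hj)


theorem coeff_distinguished {A : Type*} [CommRing A] (m : ℕ) (c : ℕ → A) (n : ℕ) :
    PowerSeries.coeff n (PowerSeries.X ^ m +
        ∑ i ∈ Finset.range m, PowerSeries.C (c i) * PowerSeries.X ^ i)
      = if n = m then 1 else if n < m then c n else 0 := by
  classical
  rw [map_add, PowerSeries.coeff_X_pow, map_sum]
  have h1 : ∀ i ∈ Finset.range m,
      PowerSeries.coeff n (PowerSeries.C (c i) * PowerSeries.X ^ i)
        = if i = n then c i else 0 := by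
    intro i _
    rw [PowerSeries.coeff_C_mul, PowerSeries.coeff_X_pow]
    by_cases h : n = i
    · simp [h]
    · simp [h, Ne.symm h]
  rw [Finset.sum_congr rfl h1, Finset.sum_ite_eq' (Finset.range m) n c]
  rcases lt_trichotomy n m with h | h | h
  · simp [h, Finset.mem_range, Nat.ne_of_lt h]
  · simp [h]
  · simp [Finset.mem_range, Nat.lt_asymm h, Nat.ne_of_gt h, not_lt_of_gt h]

end Stmt14Aux

namespace Stmt14Aux

theorem main_aux {R S : Type*} [CommRing R] [CommRing S] [IsDomain S] [IsNoetherianRing S]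
    (φ : R →+* S) (x : S) (π : R)
    (hxJ : x ∈ Ideal.jacobson (⊥ : Ideal S)) (hπJ : φ π ∈ Ideal.jacobson (⊥ : Ideal S))
    (m : ℕ) (u : PowerSeries (PowerSeries R)) (hu : IsUnit u)
    (a : ℕ → PowerSeries R)
    (ha : ∀ i < m, a i ∈ Ideal.span {PowerSeries.C π, PowerSeries.X})
    (f : PowerSeries (PowerSeries R))
    (hf : f = u * (PowerSeries.X ^ m +
      ∑ i ∈ Finset.range m, PowerSeries.C (a i) * PowerSeries.X ^ i))
    (F U : PowerSeries S)
    (hF : SpecAt φ x f F) (hU : SpecAt φ x u U) :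
    IsUnit U ∧
    ∃ b : ℕ → S,
      (∀ i < m, EvalsTo φ (a i) x (b i) ∧ ¬ IsUnit (b i)) ∧
      F = U * (PowerSeries.X ^ m +
        ∑ i ∈ Finset.range m, PowerSeries.C (b i) * PowerSeries.X ^ i) := by
  classical
  have jac_nonunit : ∀ y : S, y ∈ Ideal.jacobson (⊥ : Ideal S) → ¬ IsUnit y := by
    intro y hy hyu
    obtain ⟨c, hc⟩ := hyu.exists_right_inv
    have h0 := Ideal.mem_jacobson_bot.mp hy (-c)
    rw [mul_neg, hc, neg_add_cancel] at h0
    rw [isUnit_zero_iff] at h0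
    exact zero_ne_one h0
  have unit_add_jac : ∀ w d : S, IsUnit w → d ∈ Ideal.jacobson (⊥ : Ideal S) →
      IsUnit (w + d) := by
    intro w d hw hd
    obtain ⟨c, hc⟩ := hw.exists_right_inv
    have h2 := Ideal.mem_jacobson_bot.mp hd c
    have he : w + d = w * (d * c + 1) := by
      have h3 : w * (d * c + 1) = d * (w * c) + w := by ring
      rw [h3, hc, mul_one, add_comm]
    rw [he]
    exact hw.mul h2
  have hxnu : ¬ IsUnit x := jac_nonunit x hxJ
  -- U is a unit
  have hUunit : IsUnit U := by
    rw [PowerSeries.isUnit_iff_constantCoeff]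
    obtain ⟨d, hd⟩ := hU 0 1
    simp only [Finset.range_one, Finset.sum_singleton, pow_zero, mul_one, pow_one] at hd
    have hc : IsUnit (PowerSeries.coeff 0 (PowerSeries.coeff 0 u)) := by
      have h1 := PowerSeries.isUnit_iff_constantCoeff.mp hu
      have h2 := PowerSeries.isUnit_iff_constantCoeff.mp h1
      simpa [PowerSeries.coeff_zero_eq_constantCoeff] using h2
    have he : PowerSeries.coeff 0 U
        = φ (PowerSeries.coeff 0 (PowerSeries.coeff 0 u)) + x * d := by
      linear_combination hd
    have h4 := unit_add_jac _ (x * d) (hc.map φ) (Ideal.mul_mem_right d _ hxJ)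
    rw [← he] at h4
    simpa [PowerSeries.coeff_zero_eq_constantCoeff] using h4
  refine ⟨hUunit, ?_⟩
  obtain ⟨Uu, hUu⟩ := hUunit
  obtain ⟨uu, huu⟩ := hu
  have hUV : U * (↑Uu⁻¹ : PowerSeries S) = 1 := by rw [← hUu]; exact Uu.mul_inv
  have huv : u * (↑uu⁻¹ : PowerSeries (PowerSeries R)) = 1 := by
    rw [← huu]; exact uu.mul_inv
  have hV : SpecAt φ x (↑uu⁻¹) (↑Uu⁻¹) := specAt_inv hU huv hUV
  have hQ0 : SpecAt φ x ((↑uu⁻¹ : PowerSeries (PowerSeries R)) * f)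
      ((↑Uu⁻¹ : PowerSeries S) * F) := specAt_mul hV hF
  have hPf : (↑uu⁻¹ : PowerSeries (PowerSeries R)) * f
      = PowerSeries.X ^ m + ∑ i ∈ Finset.range m,
          PowerSeries.C (a i) * PowerSeries.X ^ i := by
    rw [hf, ← huu, ← mul_assoc, uu.inv_mul, one_mul]
  have hP : SpecAt φ x (PowerSeries.X ^ m + ∑ i ∈ Finset.range m,
      PowerSeries.C (a i) * PowerSeries.X ^ i)
      ((↑Uu⁻¹ : PowerSeries S) * F) := by rwa [hPf] at hQ0
  set b : ℕ → S := fun i => PowerSeries.coeff i ((↑Uu⁻¹ : PowerSeries S) * F) with hb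
  have hEb : ∀ i < m, EvalsTo φ (a i) x (b i) := by
    intro i hi
    have hthis := hP i
    rwa [coeff_distinguished, if_neg (Nat.ne_of_lt hi), if_pos hi] at hthis
  have hbm : b m = 1 := by
    have hthis := hP m
    rw [coeff_distinguished, if_pos rfl] at hthis
    exact evalsTo_unique hxnu hthis evalsTo_one
  have hbgt : ∀ n, m < n → b n = 0 := by
    intro n hn
    have hthis := hP n
    rw [coeff_distinguished, if_neg (Nat.ne_of_gt hn), if_neg (not_lt_of_gt hn)] at hthis
    exact evalsTo_unique hxnu hthis evalsTo_zero
  refine ⟨b, fun i hi => ⟨hEb i hi, ?_⟩, ?_⟩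
  · obtain ⟨d, hd⟩ := hEb i hi 1
    simp only [Finset.range_one, Finset.sum_singleton, pow_zero, mul_one, pow_one] at hd
    obtain ⟨c1, c2, hc⟩ := Ideal.mem_span_pair.mp (ha i hi)
    have hcc : PowerSeries.coeff 0 (a i) = PowerSeries.coeff 0 c1 * π := by
      rw [← hc]
      simp [PowerSeries.coeff_zero_eq_constantCoeff, map_mul, map_add,
        PowerSeries.constantCoeff_X, PowerSeries.constantCoeff_C]
    refine jac_nonunit _ ?_
    have he : b i = φ (PowerSeries.coeff 0 c1) * φ π + x * d := by
      have hφc : φ (PowerSeries.coeff 0 (a i))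
          = φ (PowerSeries.coeff 0 c1) * φ π := by rw [hcc, map_mul]
      linear_combination hd + hφc
    rw [he]
    exact Ideal.add_mem _ (Ideal.mul_mem_left _ _ hπJ) (Ideal.mul_mem_right d _ hxJ)
  · have hQeq : (↑Uu⁻¹ : PowerSeries S) * F = PowerSeries.X ^ m +
        ∑ i ∈ Finset.range m, PowerSeries.C (b i) * PowerSeries.X ^ i := by
      ext n
      rw [coeff_distinguished]
      rcases lt_trichotomy n m with h | h | h
      · rw [if_neg (Nat.ne_of_lt h), if_pos h]
      · rw [if_pos h, h]
        exact hbm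
      · rw [if_neg (Nat.ne_of_gt h), if_neg (not_lt_of_gt h)]
        exact hbgt n h
    calc F = (U * (↑Uu⁻¹ : PowerSeries S)) * F := by rw [hUV, one_mul]
      _ = U * ((↑Uu⁻¹ : PowerSeries S) * F) := by rw [mul_assoc]
      _ = _ := by rw [hQeq]

end Stmt14Aux


/-- let `f = u·P ∈ ℤ_p[[t₀,t₁]]` (modelled as `(ℤ_p[[t₁]])[[t₀]]`) with `u` a
unit and `P = t₀^m + Σ aᵢ(t₁)t₀^i` distinguished (each `aᵢ ∈ (p,t₁) ⊆ ℤ_p[[t₁]]`).  For every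
`p`-power root of unity `ζ` — an element of the ring of integers `ℤ_p[ζ]` of `K = ℚ_p(ζ)`
(the integral closure of `ℤ_p` in `K`, `K` generated over `ℚ_p` by `ζ`) — the specialisation
satisfies `f(t₀,ζ−1) = u′·P′` where `u′ = u(t₀,ζ−1)` is a unit of `ℤ_p[ζ][[t₀]]` and
`P′ = t₀^m + Σ aᵢ(ζ−1)t₀^i` is distinguished: each `aᵢ(ζ−1)` lies in the maximal ideal of the
local ring `ℤ_p[ζ]`, i.e. is a non-unit. -/
theorem stmt_14 (p : ℕ) [Fact p.Prime]
    (K : Type*) [Field K] [Algebra ℚ_[p] K] [FiniteDimensional ℚ_[p] K]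
    [Algebra ℤ_[p] K] [IsScalarTower ℤ_[p] ℚ_[p] K]
    (ζ : integralClosure ℤ_[p] K) (k : ℕ) (hζ : ζ ^ p ^ k = 1)
    (hgen : Algebra.adjoin ℚ_[p] {(ζ : K)} = ⊤)
    (m : ℕ) (u : PowerSeries (PowerSeries ℤ_[p])) (hu : IsUnit u)
    (a : ℕ → PowerSeries ℤ_[p])
    (ha : ∀ i < m, a i ∈ Ideal.span {((p : PowerSeries ℤ_[p])), PowerSeries.X})
    (f : PowerSeries (PowerSeries ℤ_[p]))
    (hf : f = u * (PowerSeries.X ^ m +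
      ∑ i ∈ Finset.range m,
        PowerSeries.C (a i) * PowerSeries.X ^ i))
    (F U : PowerSeries (integralClosure ℤ_[p] K))
    (hF : SpecAt (algebraMap ℤ_[p] (integralClosure ℤ_[p] K)) (ζ - 1) f F)
    (hU : SpecAt (algebraMap ℤ_[p] (integralClosure ℤ_[p] K)) (ζ - 1) u U) :
    IsUnit U ∧
    ∃ b : ℕ → integralClosure ℤ_[p] K,
      (∀ i < m, EvalsTo (algebraMap ℤ_[p] (integralClosure ℤ_[p] K)) (a i) (ζ - 1) (b i) ∧
        ¬ IsUnit (b i)) ∧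
      F = U * (PowerSeries.X ^ m +
        ∑ i ∈ Finset.range m,
          PowerSeries.C (b i) * PowerSeries.X ^ i) := by
  classical
  have hp : (p : ℕ).Prime := Fact.out
  haveI : IsNoetherianRing (integralClosure ℤ_[p] K) :=
    integralClosure.isNoetherianRing (A := ℤ_[p]) (K := ℚ_[p]) (L := K)
  have hmem : ∀ M : Ideal (integralClosure ℤ_[p] K), M.IsMaximal →
      ((p : integralClosure ℤ_[p] K) ∈ M ∧ ζ - 1 ∈ M) := by
    intro M hM
    haveI := hM
    have hpM : (p : integralClosure ℤ_[p] K) ∈ M := by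
      have hcom : (M.comap (algebraMap ℤ_[p] (integralClosure ℤ_[p] K))).IsMaximal :=
        Ideal.isMaximal_comap_of_isIntegral_of_isMaximal M
      have hmm : (p : ℤ_[p]) ∈ M.comap (algebraMap ℤ_[p] (integralClosure ℤ_[p] K)) := by
        rw [IsLocalRing.eq_maximalIdeal hcom]
        exact PadicInt.irreducible_p.not_isUnit
      rw [Ideal.mem_comap, map_natCast] at hmm
      exact hmm
    refine ⟨hpM, ?_⟩
    haveI : Nontrivial (integralClosure ℤ_[p] K ⧸ M) :=
      Ideal.Quotient.nontrivial_iff.mpr hM.ne_top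
    haveI : CharP (integralClosure ℤ_[p] K ⧸ M) p := by
      refine (CharP.charP_iff_prime_eq_zero hp).mpr ?_
      rw [← map_natCast (Ideal.Quotient.mk M) p, Ideal.Quotient.eq_zero_iff_mem]
      exact hpM
    have hq : (Ideal.Quotient.mk M (ζ - 1)) ^ (p ^ k) = 0 := by
      rw [RingHom.map_sub, RingHom.map_one, sub_pow_char_pow, ← RingHom.map_pow, hζ,
        RingHom.map_one, one_pow, sub_self]
    have hq2 : (ζ - 1) ^ (p ^ k) ∈ M := by
      rwa [← Ideal.Quotient.eq_zero_iff_mem, RingHom.map_pow]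
    exact hM.isPrime.mem_of_pow_mem _ hq2
  have hxJ : ζ - 1 ∈ Ideal.jacobson (⊥ : Ideal (integralClosure ℤ_[p] K)) :=
    Ideal.mem_sInf.mpr fun {M} hM => (hmem M hM.2).2
  have hπJ : algebraMap ℤ_[p] (integralClosure ℤ_[p] K) (p : ℤ_[p]) ∈
      Ideal.jacobson (⊥ : Ideal (integralClosure ℤ_[p] K)) := by
    rw [map_natCast]
    exact Ideal.mem_sInf.mpr fun {M} hM => (hmem M hM.2).1
  have ha' : ∀ i < m, a i ∈ Ideal.span
      {PowerSeries.C (p : ℤ_[p]), PowerSeries.X} := by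
    intro i hi
    have := ha i hi
    rwa [show ((p : PowerSeries ℤ_[p])) = PowerSeries.C (p : ℤ_[p]) by
      rw [map_natCast]] at this
  exact Stmt14Aux.main_aux (algebraMap ℤ_[p] (integralClosure ℤ_[p] K)) (ζ - 1) (p : ℤ_[p])
    hxJ hπJ m u hu a ha' f hf F U hF hU
end
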